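/- arXiv:2501.07681 — 6 statements merged into one kernel-verified Lean document; each statement's English description precedes it below -/
import Mathlib

section
/- Let d ≥ 1, K ≥ 1, and let μ be a probability measure on ℝ^d with finite second moment. Then the quadratic distortion G_{K,μ} is finite at every tuple x ∈ (ℝ^d)^K, and there exists a tuple x* = (x₁*, …, x_K*) ∈ (ℝ^d)^K attaining the infimum of G_{K,μ} over (ℝ^d)^K (an optimal quantization of μ at level K exists). -/
/-!
Take a minimizing sequence of grids for `x ↦ ∫⁻ y, min_i ‖y - x i‖²`. Passing to a subsequence,
every grid point either converges or escapes to infinity. Escaping points eventually stop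
competing for the minimum, so pointwise the liminf of the integrands dominates the integrand
of the limit grid, whatever positions are chosen for the escaped points; Fatou's lemma then
shows that this limit grid is optimal.
-/

open MeasureTheory

/-- The quadratic distortion of a quantization grid `x` w.r.t. `μ`. -/
noncomputable def distortion {d : ℕ} (μ : Measure (EuclideanSpace ℝ (Fin d))) (K : ℕ)
    (x : Fin K → EuclideanSpace ℝ (Fin d)) : ℝ :=
  ∫ y, (⨅ i : Fin K, ‖y - x i‖ ^ 2) ∂μ

open Filter Topology

theorem exists_strictMono_forall_of_exists_subseq {α ι : Type*} [Fintype ι]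
    {P : (ℕ → α) → Prop} (hP : ∀ w ψ, StrictMono ψ → P w → P (w ∘ ψ))
    (hex : ∀ w, ∃ ψ : ℕ → ℕ, StrictMono ψ ∧ P (w ∘ ψ)) (u : ι → ℕ → α) :
    ∃ φ : ℕ → ℕ, StrictMono φ ∧ ∀ i, P (u i ∘ φ) := by
  classical
  suffices ∀ T : Finset ι, ∃ φ : ℕ → ℕ, StrictMono φ ∧ ∀ i ∈ T, P (u i ∘ φ) by
    simpa using this Finset.univ
  intro T
  induction T using Finset.induction_on with
  | empty => exact ⟨id, strictMono_id, by simp⟩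
  | insert j T _ ih =>
    obtain ⟨φ, hφ, hφP⟩ := ih
    obtain ⟨ψ, hψ, hψP⟩ := hex (u j ∘ φ)
    refine ⟨φ ∘ ψ, hφ.comp hψ, fun i hi => ?_⟩
    rcases Finset.mem_insert.mp hi with rfl | hi
    · exact hψP
    · exact hP _ ψ hψ (hφP i hi)

theorem ofReal_le_liminf_of_forall_lt {α : Type*} {l : Filter α} {f : α → ℝ} {a : ℝ}
    (h : ∀ c < a, ∀ᶠ n in l, c < f n) :
    ENNReal.ofReal a ≤ liminf (fun n => ENNReal.ofReal (f n)) l := by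
  refine (le_liminf_iff).mpr fun b hb => ?_
  have hb_lt := (ENNReal.lt_ofReal_iff_toReal_lt (ne_top_of_lt hb)).mp hb
  filter_upwards [h b.toReal hb_lt] with n hn
  exact (ENNReal.lt_ofReal_iff_toReal_lt (ne_top_of_lt hb)).mpr hn

section Grid

variable {E ι : Type*} [NormedAddCommGroup E]

theorem exists_subseq_tendsto_or_tendsto_norm_atTop [ProperSpace E] (v : ℕ → E) :
    ∃ ψ : ℕ → ℕ, StrictMono ψ ∧
      ((∃ l, Tendsto (v ∘ ψ) atTop (𝓝 l)) ∨ Tendsto (fun n => ‖(v ∘ ψ) n‖) atTop atTop) := by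
  by_cases hv : Tendsto (fun n => ‖v n‖) atTop atTop
  · exact ⟨id, strictMono_id, .inr hv⟩
  obtain ⟨C, hC⟩ : ∃ C, ∃ᶠ n in atTop, ‖v n‖ < C := by
    simpa [tendsto_atTop, frequently_atTop] using hv
  obtain ⟨ψ₁, hψ₁, hψ₁C⟩ := extraction_of_frequently_atTop hC
  obtain ⟨l, -, ψ₂, hψ₂, hl⟩ :=
    tendsto_subseq_of_bounded (Metric.isBounded_ball (x := 0) (r := C)) (x := v ∘ ψ₁)
      (by simpa using hψ₁C)
  exact ⟨ψ₁ ∘ ψ₂, hψ₁.comp hψ₂, .inl ⟨l, hl⟩⟩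

theorem exists_subseq_forall_tendsto_or_tendsto_norm_atTop [ProperSpace E] [Fintype ι]
    (u : ℕ → ι → E) :
    ∃ φ : ℕ → ℕ, StrictMono φ ∧ ∃ L : ι → E, ∀ i,
      Tendsto (fun n => u (φ n) i) atTop (𝓝 (L i)) ∨
        Tendsto (fun n => ‖u (φ n) i‖) atTop atTop := by
  obtain ⟨φ, hφ, hu⟩ := exists_strictMono_forall_of_exists_subseq
    (P := fun w => (∃ l, Tendsto w atTop (𝓝 l)) ∨ Tendsto (fun n => ‖w n‖) atTop atTop)
    (fun w ψ hψ hw => hw.imp (fun ⟨l, hl⟩ => ⟨l, hl.comp hψ.tendsto_atTop⟩)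
      (·.comp hψ.tendsto_atTop))
    exists_subseq_tendsto_or_tendsto_norm_atTop (fun i n => u n i)
  have : ∀ i, ∃ l, Tendsto (fun n => u (φ n) i) atTop (𝓝 l) ∨
      Tendsto (fun n => ‖u (φ n) i‖) atTop atTop := fun i =>
    (hu i).elim (fun ⟨l, hl⟩ => ⟨l, .inl hl⟩) (fun h => ⟨0, .inr h⟩)
  choose L hL using this
  exact ⟨φ, hφ, L, hL⟩

noncomputable def gridSqDist (x : ι → E) (y : E) : ℝ := ⨅ i, ‖y - x i‖ ^ 2

theorem gridSqDist_le (x : ι → E) (y : E) (i : ι) : gridSqDist x y ≤ ‖y - x i‖ ^ 2 :=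
  ciInf_le ⟨0, fun _ ⟨_, h⟩ => h ▸ by positivity⟩ i

theorem gridSqDist_nonneg (x : ι → E) (y : E) : 0 ≤ gridSqDist x y :=
  Real.iInf_nonneg fun _ => by positivity

theorem measurable_gridSqDist [MeasurableSpace E] [OpensMeasurableSpace E] [Countable ι]
    (x : ι → E) : Measurable (gridSqDist x) :=
  Measurable.iInf fun _ => ((continuous_id.sub continuous_const).norm.pow 2).measurable

theorem gridSqDist_le_two_mul (x : ι → E) (y : E) (i : ι) :
    gridSqDist x y ≤ 2 * ‖y‖ ^ 2 + 2 * ‖x i‖ ^ 2 := by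
  refine (gridSqDist_le x y i).trans ?_
  nlinarith [norm_sub_le y (x i), norm_nonneg (y - x i), sq_nonneg (‖y‖ - ‖x i‖)]

theorem integrable_gridSqDist [MeasurableSpace E] [OpensMeasurableSpace E] [Countable ι]
    [Nonempty ι] {μ : Measure E} [IsFiniteMeasure μ] (hμ : Integrable (fun y => ‖y‖ ^ 2) μ)
    (x : ι → E) : Integrable (gridSqDist x) μ := by
  let i : ι := Classical.arbitrary ι
  refine ((hμ.const_mul 2).add (integrable_const (2 * ‖x i‖ ^ 2))).mono'
    (measurable_gridSqDist x).aestronglyMeasurable (.of_forall fun y => ?_)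
  rw [Real.norm_of_nonneg (gridSqDist_nonneg x y)]
  exact gridSqDist_le_two_mul x y i

theorem eventually_lt_norm_sub_sq {v : ℕ → E} {x y : E} {c : ℝ}
    (hv : Tendsto v atTop (𝓝 x) ∨ Tendsto (fun n => ‖v n‖) atTop atTop)
    (hc : c < ‖y - x‖ ^ 2) : ∀ᶠ n in atTop, c < ‖y - v n‖ ^ 2 := by
  rcases hv with hv | hv
  · exact ((tendsto_const_nhds.sub hv).norm.pow 2).eventually_const_lt hc
  · have hdist : Tendsto (fun n => ‖y - v n‖) atTop atTop :=
      tendsto_atTop_mono (fun n => by rw [norm_sub_rev]; exact norm_sub_norm_le (v n) y)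
        (tendsto_atTop_add_const_right _ (-‖y‖) hv)
    exact ((tendsto_pow_atTop two_ne_zero).comp hdist).eventually_gt_atTop c

theorem eventually_lt_gridSqDist [Finite ι] [Nonempty ι] {v : ℕ → ι → E} {x : ι → E} {y : E}
    {c : ℝ} (hv : ∀ i, Tendsto (fun n => v n i) atTop (𝓝 (x i)) ∨
      Tendsto (fun n => ‖v n i‖) atTop atTop)
    (hc : c < gridSqDist x y) : ∀ᶠ n in atTop, c < gridSqDist (v n) y := by
  have hall : ∀ᶠ n in atTop, ∀ i, c < ‖y - v n i‖ ^ 2 :=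
    eventually_all.mpr fun i => eventually_lt_norm_sub_sq (hv i) (hc.trans_le (gridSqDist_le x y i))
  filter_upwards [hall] with n hn
  obtain ⟨i, hi⟩ := exists_eq_ciInf_of_finite (f := fun i => ‖y - v n i‖ ^ 2)
  rw [gridSqDist, ← hi]
  exact hn i

theorem exists_forall_lintegral_gridSqDist_le [ProperSpace E] [MeasurableSpace E]
    [OpensMeasurableSpace E] [Fintype ι] [Nonempty ι] (μ : Measure E) :
    ∃ x : ι → E, ∀ x' : ι → E, ∫⁻ y, ENNReal.ofReal (gridSqDist x y) ∂μ ≤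
      ∫⁻ y, ENNReal.ofReal (gridSqDist x' y) ∂μ := by
  set Φ : (ι → E) → ENNReal := fun x => ∫⁻ y, ENNReal.ofReal (gridSqDist x y) ∂μ
  obtain ⟨a, -, ha, haΦ⟩ := exists_seq_tendsto_sInf (Set.range_nonempty Φ) (OrderBot.bddBelow _)
  choose u hu using haΦ
  obtain ⟨φ, hφ, L, hL⟩ := exists_subseq_forall_tendsto_or_tendsto_norm_atTop u
  refine ⟨L, fun x => ?_⟩
  calc Φ L ≤ ∫⁻ y, liminf (fun n => ENNReal.ofReal (gridSqDist (u (φ n)) y)) atTop ∂μ :=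
        lintegral_mono fun y => ofReal_le_liminf_of_forall_lt fun _ => eventually_lt_gridSqDist hL
    _ ≤ liminf (fun n => Φ (u (φ n))) atTop :=
        lintegral_liminf_le fun n => (measurable_gridSqDist _).ennreal_ofReal
    _ = sInf (Set.range Φ) := by
        simp only [hu]
        exact (ha.comp hφ.tendsto_atTop).liminf_eq
    _ ≤ Φ x := sInf_le (Set.mem_range_self x)

end Grid

theorem stmt5_general (d K : ℕ) (hK : 1 ≤ K)
    (μ : Measure (EuclideanSpace ℝ (Fin d))) [IsProbabilityMeasure μ]
    (hμ2 : Integrable (fun y => ‖y‖ ^ 2) μ) :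
    (∀ x : Fin K → EuclideanSpace ℝ (Fin d),
        Integrable (fun y => ⨅ i : Fin K, ‖y - x i‖ ^ 2) μ) ∧
    ∃ xstar : Fin K → EuclideanSpace ℝ (Fin d),
      ∀ x : Fin K → EuclideanSpace ℝ (Fin d), distortion μ K xstar ≤ distortion μ K x := by
  have : Nonempty (Fin K) := ⟨⟨0, hK⟩⟩
  have hint := integrable_gridSqDist (ι := Fin K) hμ2
  refine ⟨hint, ?_⟩
  obtain ⟨xstar, hmin⟩ := exists_forall_lintegral_gridSqDist_le (ι := Fin K) μ
  refine ⟨xstar, fun x => ?_⟩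
  have hnonneg : ∀ x' : Fin K → EuclideanSpace ℝ (Fin d), 0 ≤ᵐ[μ] gridSqDist x' :=
    fun x' => .of_forall (gridSqDist_nonneg x')
  change ∫ y, gridSqDist xstar y ∂μ ≤ ∫ y, gridSqDist x y ∂μ
  rw [← ENNReal.ofReal_le_ofReal_iff (integral_nonneg (gridSqDist_nonneg x)),
    ofReal_integral_eq_lintegral_ofReal (hint xstar) (hnonneg xstar),
    ofReal_integral_eq_lintegral_ofReal (hint x) (hnonneg x)]
  exact hmin x

theorem stmt5 (d K : ℕ) (hd : 1 ≤ d) (hK : 1 ≤ K)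
    (μ : Measure (EuclideanSpace ℝ (Fin d))) [IsProbabilityMeasure μ]
    (hμ2 : Integrable (fun y => ‖y‖ ^ 2) μ) :
    (∀ x : Fin K → EuclideanSpace ℝ (Fin d),
        Integrable (fun y => ⨅ i : Fin K, ‖y - x i‖ ^ 2) μ) ∧
    ∃ xstar : Fin K → EuclideanSpace ℝ (Fin d),
      ∀ x : Fin K → EuclideanSpace ℝ (Fin d), distortion μ K xstar ≤ distortion μ K x :=
  stmt5_general d K hK μ hμ2
end

section
/- For every dimension d ≥ 1 and every η > 0 there exists a constant C_{d,η} ∈ (0, ∞) such that for every probability measure μ on ℝ^d with finite (2+η)-th moment and every quantization level K ≥ 1, the optimal quantization error satisfies e*_{K,μ} ≤ C_{d,η} · σ_{2+η}(μ) · K^{−1/d}, where σ_r(μ) = inf_{a ∈ ℝ^d} ( ∫_{ℝ^d} ‖x − a‖^r dμ(x) )^{1/r}. -/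
/-!
Fix a centre `a` and a scale `σ > 0` with `∫ ‖y - a‖ ^ (2 + η) dμ ≤ σ ^ (2 + η)`, and put
`ρ = 2 ^ (η / 2)`. For a resolution `x ≥ 1`, cover each ball of radius `2 ^ j σ`, `ρ ^ j ≤ x`,
by a cubic grid with about `x / ρ ^ j` points per side, and add the point `a`. The number of
points is a geometric series, `O(x ^ d)`, and the side counts are tuned so that every `y` lies
within squared distance `O(x ^ (-2)) * (σ ^ 2 + σ ^ (-η) * ‖y - a‖ ^ (2 + η))` of the grid:
inside the layers because the mesh at radius `2 ^ j σ` matches that weight there, beyond them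
because the last layer is so far out that `a` itself is close enough. The weight integrates
to at most `2 σ ^ 2`, and `x ≈ K ^ (1 / d)` gives `K` points. Letting `σ` decrease to the
`L ^ (2 + η)` deviation about `a` and varying `a` gives the theorem.
-/

open MeasureTheory

/-- The optimal quantization error at level `K`. -/
noncomputable def optQuantError {d : ℕ} (μ : Measure (EuclideanSpace ℝ (Fin d))) (K : ℕ) : ℝ :=
  Real.sqrt (⨅ x : Fin K → EuclideanSpace ℝ (Fin d), distortion μ K x)

open Finset

lemma exists_lt_le_succ_of_lt_of_le {α : Type*} [LinearOrder α] {f : ℕ → α} {t : α}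
    (h₀ : f 0 < t) : ∀ {J : ℕ}, t ≤ f J → ∃ k < J, f k < t ∧ t ≤ f (k + 1)
  | 0, hJ => absurd h₀ hJ.not_gt
  | J + 1, hJ => by
    rcases le_or_gt t (f J) with h | h
    · obtain ⟨k, hk, hfk⟩ := exists_lt_le_succ_of_lt_of_le h₀ h
      exact ⟨k, hk.trans J.lt_succ_self, hfk⟩
    · exact ⟨J, J.lt_succ_self, h, hJ⟩

lemma round_mem_Icc_of_abs_le {x : ℝ} {n : ℤ} (hx : |x| ≤ n) : round x ∈ Icc (-n) n := by
  obtain ⟨hlo, hhi⟩ := abs_le.1 hx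
  have h₁ : ((-n - 1 : ℤ) : ℝ) < round x := by push_cast; linarith [sub_half_lt_round x]
  have h₂ : (round x : ℝ) < (n + 1 : ℤ) := by push_cast; linarith [round_le_add_half x]
  rw [mem_Icc]
  constructor <;> [have := Int.cast_lt.1 h₁; have := Int.cast_lt.1 h₂] <;> omega

lemma EuclideanSpace.norm_le_sqrt_card_mul {ι : Type*} [Fintype ι] {v : EuclideanSpace ℝ ι}
    {ε : ℝ} (hε : 0 ≤ ε) (hv : ∀ i, |v i| ≤ ε) : ‖v‖ ≤ √(Fintype.card ι) * ε := by
  rw [EuclideanSpace.norm_eq, ← Real.sqrt_sq hε, ← Real.sqrt_mul (Nat.cast_nonneg _)]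
  refine Real.sqrt_le_sqrt ?_
  calc ∑ i, ‖v i‖ ^ 2 ≤ ∑ _i : ι, ε ^ 2 := sum_le_sum fun i _ => by
        rw [Real.norm_eq_abs]; exact pow_le_pow_left₀ (abs_nonneg _) (hv i) 2
    _ = Fintype.card ι * ε ^ 2 := by simp

lemma EuclideanSpace.exists_finset_card_le_dist_le {ι : Type*} [Fintype ι] [DecidableEq ι]
    (a : EuclideanSpace ℝ ι) {R : ℝ} (hR : 0 < R) {N : ℕ} (hN : 0 < N) :
    ∃ s : Finset (EuclideanSpace ℝ ι), s.card ≤ (2 * N + 1) ^ Fintype.card ι ∧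
      ∀ y, ‖y - a‖ ≤ R → ∃ q ∈ s, ‖y - q‖ ≤ √(Fintype.card ι) * R / (2 * N) := by
  set h : ℝ := R / N
  have hh : 0 < h := by positivity
  let node : (ι → ℤ) → EuclideanSpace ℝ ι := fun k => a + h • WithLp.toLp 2 (fun i => (k i : ℝ))
  refine ⟨(Fintype.piFinset fun _ => Icc (-N : ℤ) N).image node, card_image_le.trans ?_, ?_⟩
  · rw [Fintype.card_piFinset, prod_const, card_univ, Int.card_Icc]
    exact le_of_eq (by congr 1; omega)
  intro y hy
  set k : ι → ℤ := fun i => round ((y - a) i / h)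
  refine ⟨node k, mem_image_of_mem _ (Fintype.mem_piFinset.2 fun i => ?_), ?_⟩
  · apply round_mem_Icc_of_abs_le
    rw [abs_div, abs_of_pos hh, div_le_iff₀ hh]
    push_cast
    calc |(y - a) i| ≤ ‖y - a‖ := by simpa using PiLp.norm_apply_le (y - a) i
      _ ≤ R := hy
      _ = N * h := by simp only [h]; field_simp
  · have hcoord : ∀ i, |(y - node k) i| ≤ h / 2 := fun i => by
      have : (y - node k) i = h * ((y - a) i / h - k i) := by
        simp [node]; field_simp; ring
      rw [this, abs_mul, abs_of_pos hh]
      nlinarith [abs_sub_round ((y - a) i / h)]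
    refine (EuclideanSpace.norm_le_sqrt_card_mul (by positivity) hcoord).trans_eq ?_
    simp only [h]; ring

lemma sq_le_rpow_neg_mul_rpow {s t η : ℝ} (hs : 0 < s) (hst : s ≤ t) (hη : 0 ≤ η) :
    t ^ 2 ≤ s ^ (-η) * t ^ (2 + η) := by
  have ht : 0 < t := hs.trans_le hst
  have hst' : 1 ≤ s ^ (-η) * t ^ η := by
    rw [Real.rpow_neg hs.le, inv_mul_eq_div, one_le_div (Real.rpow_pos_of_pos hs η)]
    exact Real.rpow_le_rpow hs.le hst hη
  calc t ^ 2 ≤ t ^ 2 * (s ^ (-η) * t ^ η) := le_mul_of_one_le_right (by positivity) hst'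
    _ = s ^ (-η) * t ^ (2 + η) := by rw [Real.rpow_add ht, Real.rpow_two]; ring

lemma sq_le_add_rpow_neg_mul_rpow {σ t η : ℝ} (hσ : 0 < σ) (ht : 0 ≤ t) (hη : 0 ≤ η) :
    t ^ 2 ≤ σ ^ 2 + σ ^ (-η) * t ^ (2 + η) := by
  have := Real.rpow_nonneg hσ.le (-η)
  have := Real.rpow_nonneg ht (2 + η)
  rcases le_total t σ with h | h
  · nlinarith [pow_le_pow_left₀ ht h 2]
  · nlinarith [sq_le_rpow_neg_mul_rpow hσ h hη]

lemma rpow_two_mul_le {s t η : ℝ} (hs : 0 ≤ s) (hst : s ≤ t) (hη : 0 ≤ η) :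
    (2 * s) ^ (2 + η) ≤ 4 * 2 ^ η * t ^ (2 + η) := by
  rw [Real.mul_rpow zero_le_two hs, Real.rpow_add two_pos]
  norm_num
  gcongr

lemma rpow_half_pow_sq {b : ℝ} (hb : 0 ≤ b) (η : ℝ) (n : ℕ) :
    ((b ^ (η / 2)) ^ n) ^ 2 = (b ^ n) ^ η := by
  rw [Real.rpow_pow_comm hb, ← Real.rpow_mul_natCast (pow_nonneg hb n)]
  norm_num

lemma two_pow_mul_rpow_neg_le {η σ x : ℝ} {J : ℕ} (hσ : 0 < σ) (hx : 0 < x)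
    (hxJ : x < (2 ^ (η / 2)) ^ (J + 1)) :
    (2 ^ J * σ) ^ (-η) ≤ 2 ^ η / x ^ 2 * σ ^ (-η) := by
  have hxJ₂ : x ^ 2 < 2 ^ η * (2 ^ J) ^ η := by
    have := pow_lt_pow_left₀ hxJ hx.le two_ne_zero
    rwa [rpow_half_pow_sq zero_le_two, pow_succ' (2 : ℝ) J,
      Real.mul_rpow zero_le_two (by positivity)] at this
  rw [Real.mul_rpow (by positivity) hσ.le, Real.rpow_neg (by positivity)]
  gcongr
  rw [inv_eq_one_div, div_le_div_iff₀ (by positivity) (by positivity)]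
  linarith

lemma sum_two_mul_ceil_div_pow_add_one_pow_le {q x : ℝ} (hq : 1 < q) {d J : ℕ} (hd : 1 ≤ d)
    (hJ : q ^ J ≤ x) :
    ∑ j ∈ range (J + 1), ((2 * ⌈x / q ^ j⌉₊ + 1 : ℕ) : ℝ) ^ d ≤
      5 ^ d * (1 - (q ^ d)⁻¹)⁻¹ * x ^ d := by
  have hqd : 1 < q ^ d := one_lt_pow₀ hq (by omega)
  have hterm : ∀ j ∈ range (J + 1),
      ((2 * ⌈x / q ^ j⌉₊ + 1 : ℕ) : ℝ) ^ d ≤ 5 ^ d * x ^ d * ((q ^ d)⁻¹) ^ j := fun j hj => by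
    have hqj : 0 < q ^ j := by positivity
    have h1 : 1 ≤ x / q ^ j := by
      rw [one_le_div hqj]
      exact (pow_le_pow_right₀ hq.le (Nat.lt_succ_iff.1 (mem_range.1 hj))).trans hJ
    have h2 : ((2 * ⌈x / q ^ j⌉₊ + 1 : ℕ) : ℝ) ≤ 5 * (x / q ^ j) := by
      push_cast
      linarith [Nat.ceil_lt_add_one (zero_le_one.trans h1)]
    calc ((2 * ⌈x / q ^ j⌉₊ + 1 : ℕ) : ℝ) ^ d ≤ (5 * (x / q ^ j)) ^ d :=
          pow_le_pow_left₀ (Nat.cast_nonneg _) h2 d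
      _ = 5 ^ d * x ^ d * ((q ^ d)⁻¹) ^ j := by
          rw [mul_pow, div_pow, ← pow_mul, mul_comm j, pow_mul, inv_pow]; ring
  calc _ ≤ ∑ j ∈ range (J + 1), 5 ^ d * x ^ d * ((q ^ d)⁻¹) ^ j := sum_le_sum hterm
    _ = 5 ^ d * x ^ d * ∑ j ∈ Ico 0 (J + 1), ((q ^ d)⁻¹) ^ j := by rw [mul_sum, range_eq_Ico]
    _ ≤ 5 ^ d * x ^ d * (1 - (q ^ d)⁻¹)⁻¹ := by
        have hx : 0 ≤ x := (pow_pos (zero_lt_one.trans hq) J).le.trans hJ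
        gcongr
        simpa using geom_sum_Ico_le_of_lt_one (m := 0) (n := J + 1) (by positivity)
          (inv_lt_one_of_one_lt₀ hqd)
    _ = 5 ^ d * (1 - (q ^ d)⁻¹)⁻¹ * x ^ d := by ring

lemma integrable_norm_sub_rpow {E : Type*} [NormedAddCommGroup E] [MeasurableSpace E]
    [OpensMeasurableSpace E] [SecondCountableTopology E] {μ : Measure E} [IsFiniteMeasure μ]
    {p : ℝ} (hp : 0 < p) (h : Integrable (fun y => ‖y‖ ^ p) μ) (a : E) :
    Integrable (fun y => ‖y - a‖ ^ p) μ := by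
  have hp' : ENNReal.ofReal p ≠ 0 := by simpa using hp
  have key := fun (f : E → E) hf =>
    integrable_norm_rpow_iff (μ := μ) (f := f) hf hp' ENNReal.ofReal_ne_top
  rw [ENNReal.toReal_ofReal hp.le] at key
  exact (key _ (by fun_prop)).2 (((key _ aestronglyMeasurable_id).1 h).sub (memLp_const a))

lemma integral_add_rpow_neg_mul_le {Ω : Type*} [MeasurableSpace Ω] {μ : Measure Ω}
    [IsProbabilityMeasure μ] {f : Ω → ℝ} (hf : Integrable f μ) {σ η : ℝ} (hσ : 0 < σ)
    (hfσ : ∫ y, f y ∂μ ≤ σ ^ (2 + η)) :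
    ∫ y, (σ ^ 2 + σ ^ (-η) * f y) ∂μ ≤ 2 * σ ^ 2 := by
  rw [integral_add (integrable_const _) (hf.const_mul _), integral_const, integral_const_mul]
  have : σ ^ (-η) * σ ^ (2 + η) = σ ^ 2 := by
    rw [← Real.rpow_add hσ]; norm_num
  simp only [probReal_univ, one_smul]
  nlinarith [mul_le_mul_of_nonneg_left hfσ (Real.rpow_nonneg hσ.le (-η))]

section

variable {d : ℕ}

lemma exists_finset_dyadic_layers (η : ℝ) (a : EuclideanSpace ℝ (Fin d)) {σ x : ℝ}
    (hσ : 0 < σ) (hx : 0 < x) (J : ℕ) :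
    ∃ S : Finset (EuclideanSpace ℝ (Fin d)), a ∈ S ∧
      (S.card : ℝ) ≤
        1 + ∑ j ∈ range (J + 1), ((2 * ⌈x / (2 ^ (η / 2)) ^ j⌉₊ + 1 : ℕ) : ℝ) ^ d ∧
      ∀ j ≤ J, ∀ y, ‖y - a‖ ≤ 2 ^ j * σ →
        ∃ q ∈ S, ‖y - q‖ ^ 2 ≤ d / (4 * x ^ 2) * σ ^ (-η) * (2 ^ j * σ) ^ (2 + η) := by
  classical
  set ρ : ℝ := 2 ^ (η / 2)
  set N : ℕ → ℕ := fun j => ⌈x / ρ ^ j⌉₊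
  have hNpos : ∀ j, 0 < N j := fun j => Nat.ceil_pos.2 (by positivity)
  choose g hgcard hg using fun j =>
    EuclideanSpace.exists_finset_card_le_dist_le a (R := 2 ^ j * σ) (by positivity) (hNpos j)
  simp only [Fintype.card_fin] at hgcard hg
  refine ⟨insert a ((range (J + 1)).biUnion g), mem_insert_self _ _, ?_, ?_⟩
  · have hunion := (card_biUnion_le (s := range (J + 1)) (t := g)).trans
      (sum_le_sum fun j _ => hgcard j)
    have hS : (insert a ((range (J + 1)).biUnion g)).card ≤
        1 + ∑ j ∈ range (J + 1), (2 * N j + 1) ^ d :=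
      (card_insert_le _ _).trans (by omega)
    exact_mod_cast hS
  intro j hj y hy
  obtain ⟨q, hq, hyq⟩ := hg j y hy
  refine ⟨q, mem_insert_of_mem (mem_biUnion.2 ⟨j, mem_range.2 (Nat.lt_succ_of_le hj), hq⟩), ?_⟩
  have hmesh : ‖y - q‖ ≤ √d * (2 ^ j * σ) * ρ ^ j / (2 * x) :=
    calc ‖y - q‖ ≤ √d * (2 ^ j * σ) / (2 * N j) := hyq
      _ ≤ √d * (2 ^ j * σ) / (2 * (x / ρ ^ j)) := by gcongr; exact Nat.le_ceil _
      _ = _ := by field_simp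
  have hscale : (ρ ^ j) ^ 2 * σ ^ η = (2 ^ j * σ) ^ η := by
    rw [rpow_half_pow_sq zero_le_two, ← Real.mul_rpow (by positivity) hσ.le]
  calc ‖y - q‖ ^ 2 ≤ (√d * (2 ^ j * σ) * ρ ^ j / (2 * x)) ^ 2 :=
        pow_le_pow_left₀ (norm_nonneg _) hmesh 2
    _ = d / (4 * x ^ 2) * σ ^ (-η) * (2 ^ j * σ) ^ (2 + η) := by
        rw [Real.rpow_add (by positivity), ← hscale, Real.rpow_two, Real.rpow_neg hσ.le]
        field_simp
        rw [Real.sq_sqrt (Nat.cast_nonneg _)]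
        ring

lemma exists_mem_sq_dist_le_weight_of_dyadic_layers {η σ x : ℝ} (hη : 0 < η) (hσ : 0 < σ)
    (hx : 0 < x) {J : ℕ} (hxJ : x < (2 ^ (η / 2)) ^ (J + 1)) {a : EuclideanSpace ℝ (Fin d)}
    {S : Finset (EuclideanSpace ℝ (Fin d))} (haS : a ∈ S)
    (hlayer : ∀ j ≤ J, ∀ y, ‖y - a‖ ≤ 2 ^ j * σ →
      ∃ q ∈ S, ‖y - q‖ ^ 2 ≤ d / (4 * x ^ 2) * σ ^ (-η) * (2 ^ j * σ) ^ (2 + η))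
    (y : EuclideanSpace ℝ (Fin d)) :
    ∃ q ∈ S,
      ‖y - q‖ ^ 2 ≤ (d + 1) * 2 ^ η / x ^ 2 * (σ ^ 2 + σ ^ (-η) * ‖y - a‖ ^ (2 + η)) := by
  set t := ‖y - a‖
  set P := σ ^ (-η) * t ^ (2 + η)
  have hd : (0 : ℝ) ≤ d := Nat.cast_nonneg d
  have hσ₂ : σ ^ 2 ≤ 2 ^ η * σ ^ 2 :=
    le_mul_of_one_le_left (sq_nonneg σ) (Real.one_le_rpow one_le_two hη.le)
  have hP₂ : 0 ≤ 2 ^ η * P := by positivity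
  have hweight : ∀ B, B ≤ (d + 1) * 2 ^ η * (σ ^ 2 + P) → B / x ^ 2 ≤ _ := fun B hB =>
    (div_le_div_of_nonneg_right hB (sq_nonneg x)).trans_eq (div_mul_eq_mul_div _ _ _).symm
  rcases le_or_gt t σ with h₀ | h₀
  · obtain ⟨q, hq, hyq⟩ := hlayer 0 J.zero_le y (by simpa using h₀)
    refine ⟨q, hq, hyq.trans ?_⟩
    have : σ ^ (-η) * (2 ^ 0 * σ) ^ (2 + η) = σ ^ 2 := by
      rw [pow_zero, one_mul, ← Real.rpow_add hσ]; norm_num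
    calc d / (4 * x ^ 2) * σ ^ (-η) * (2 ^ 0 * σ) ^ (2 + η) = (d / 4 * σ ^ 2) / x ^ 2 := by
          rw [mul_assoc, this]; ring
      _ ≤ _ := hweight _ (by nlinarith [mul_nonneg hd (sub_nonneg.2 hσ₂), mul_nonneg hd hP₂])
  rcases le_or_gt t (2 ^ J * σ) with hJ | hJ
  · obtain ⟨k, hk, hkt, htk⟩ := exists_lt_le_succ_of_lt_of_le (f := fun j => 2 ^ j * σ)
      (by simpa using h₀) hJ
    obtain ⟨q, hq, hyq⟩ := hlayer (k + 1) hk y htk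
    refine ⟨q, hq, hyq.trans ?_⟩
    have hk' : 2 ^ (k + 1) * σ = 2 * (2 ^ k * σ) := by ring
    calc d / (4 * x ^ 2) * σ ^ (-η) * (2 ^ (k + 1) * σ) ^ (2 + η)
        ≤ d / (4 * x ^ 2) * σ ^ (-η) * (4 * 2 ^ η * t ^ (2 + η)) := by
          rw [hk']
          gcongr
          exact rpow_two_mul_le (by positivity) hkt.le hη.le
      _ = (d * 2 ^ η * P) / x ^ 2 := by ring
      _ ≤ _ := hweight _ (by nlinarith [mul_nonneg hd (sub_nonneg.2 hσ₂), mul_nonneg hd hP₂])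
  · refine ⟨a, haS, (sq_le_rpow_neg_mul_rpow (by positivity) hJ.le hη.le).trans ?_⟩
    calc (2 ^ J * σ) ^ (-η) * t ^ (2 + η) ≤ 2 ^ η / x ^ 2 * σ ^ (-η) * t ^ (2 + η) := by
          gcongr
          exact two_pow_mul_rpow_neg_le hσ hx hxJ
      _ = (2 ^ η * P) / x ^ 2 := by ring
      _ ≤ _ := hweight _ (by nlinarith [mul_nonneg hd (sub_nonneg.2 hσ₂), mul_nonneg hd hP₂])

theorem exists_finset_sq_dist_le_weight (hd : 1 ≤ d) {η : ℝ} (hη : 0 < η) :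
    ∃ A c : ℝ, 0 < A ∧ 0 ≤ c ∧ ∀ (a : EuclideanSpace ℝ (Fin d)) {σ x : ℝ}, 0 < σ → 1 ≤ x →
      ∃ S : Finset (EuclideanSpace ℝ (Fin d)), (S.card : ℝ) ≤ A * x ^ d ∧
        ∀ y, ∃ q ∈ S, ‖y - q‖ ^ 2 ≤ c / x ^ 2 * (σ ^ 2 + σ ^ (-η) * ‖y - a‖ ^ (2 + η)) := by
  set ρ : ℝ := 2 ^ (η / 2)
  have hρ : 1 < ρ := Real.one_lt_rpow one_lt_two (by positivity)
  have hρd : 1 < ρ ^ d := one_lt_pow₀ hρ (by omega)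
  refine ⟨1 + 5 ^ d * (1 - (ρ ^ d)⁻¹)⁻¹, (d + 1) * 2 ^ η, ?_, by positivity,
    fun a σ x hσ hx => ?_⟩
  · have : 0 < 1 - (ρ ^ d)⁻¹ := sub_pos.2 (inv_lt_one_of_one_lt₀ hρd)
    positivity
  have hx₀ : 0 < x := by linarith
  obtain ⟨J, hJ, hxJ⟩ := exists_nat_pow_near hx hρ
  obtain ⟨S, haS, hcard, hlayer⟩ := exists_finset_dyadic_layers η a hσ hx₀ J
  refine ⟨S, ?_, exists_mem_sq_dist_le_weight_of_dyadic_layers hη hσ hx₀ hxJ haS hlayer⟩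
  have := sum_two_mul_ceil_div_pow_add_one_pow_le hρ hd hJ
  nlinarith [one_le_pow₀ (n := d) hx]

theorem exists_finset_card_le_sq_dist_le_weight (hd : 1 ≤ d) {η : ℝ} (hη : 0 < η) :
    ∃ C : ℝ, 0 < C ∧ ∀ (a : EuclideanSpace ℝ (Fin d)) {σ : ℝ}, 0 < σ → ∀ {K : ℕ}, 1 ≤ K →
      ∃ S : Finset (EuclideanSpace ℝ (Fin d)), S.card ≤ K ∧ ∀ y, ∃ q ∈ S,
        ‖y - q‖ ^ 2 ≤ C / ((K : ℝ) ^ (d : ℝ)⁻¹) ^ 2 * (σ ^ 2 + σ ^ (-η) * ‖y - a‖ ^ (2 + η)) := by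
  obtain ⟨A, c, hA, hc, hcover⟩ := exists_finset_sq_dist_le_weight hd hη
  refine ⟨(1 + c) * (A ^ (d : ℝ)⁻¹) ^ 2, by positivity, fun a σ hσ K hK => ?_⟩
  have hK₀ : (0 : ℝ) < K := by exact_mod_cast hK
  set r := (K : ℝ) ^ (d : ℝ)⁻¹
  have hr : 0 < r := by positivity
  rcases lt_or_ge (K : ℝ) A with hKA | hKA
  · refine ⟨{a}, by simpa using hK, fun y => ⟨a, mem_singleton_self a, ?_⟩⟩
    have hrA : r ^ 2 ≤ (1 + c) * (A ^ (d : ℝ)⁻¹) ^ 2 := by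
      have : r ≤ A ^ (d : ℝ)⁻¹ := Real.rpow_le_rpow hK₀.le hKA.le (by positivity)
      nlinarith [pow_le_pow_left₀ hr.le this 2, sq_nonneg (A ^ (d : ℝ)⁻¹)]
    have := sq_le_add_rpow_neg_mul_rpow hσ (norm_nonneg (y - a)) hη.le
    refine this.trans (le_mul_of_one_le_left (by positivity) ?_)
    rwa [one_le_div (by positivity)]
  · set x := ((K : ℝ) / A) ^ (d : ℝ)⁻¹
    have hx : 1 ≤ x := Real.one_le_rpow ((one_le_div hA).2 hKA) (by positivity)
    obtain ⟨S, hS, hSy⟩ := hcover a hσ hx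
    refine ⟨S, ?_, fun y => ?_⟩
    · have : A * x ^ d = K := by
        rw [Real.rpow_inv_natCast_pow (by positivity) (by omega)]; field_simp
      exact_mod_cast hS.trans this.le
    obtain ⟨q, hq, hyq⟩ := hSy y
    refine ⟨q, hq, hyq.trans (mul_le_mul_of_nonneg_right ?_ (by positivity))⟩
    have : x = r / A ^ (d : ℝ)⁻¹ := Real.div_rpow hK₀.le hA.le _
    rw [this, div_pow, div_div_eq_mul_div]
    gcongr
    linarith

lemma optQuantError_le_sqrt_distortion (μ : Measure (EuclideanSpace ℝ (Fin d))) {K : ℕ}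
    (x : Fin K → EuclideanSpace ℝ (Fin d)) : optQuantError μ K ≤ √(distortion μ K x) := by
  refine Real.sqrt_le_sqrt (ciInf_le ⟨0, ?_⟩ x)
  rintro _ ⟨x', rfl⟩
  exact integral_nonneg fun y => Real.iInf_nonneg fun i => by positivity

lemma optQuantError_le_sqrt_integral {μ : Measure (EuclideanSpace ℝ (Fin d))} {K : ℕ}
    {S : Finset (EuclideanSpace ℝ (Fin d))} (hS : S.card ≤ K) {g : EuclideanSpace ℝ (Fin d) → ℝ}
    (hg : Integrable g μ) (hSg : ∀ y, ∃ q ∈ S, ‖y - q‖ ^ 2 ≤ g y) :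
    optQuantError μ K ≤ √(∫ y, g y ∂μ) := by
  let x : Fin K → EuclideanSpace ℝ (Fin d) := fun i => S.toList.getD i 0
  have hx : ∀ q ∈ S, ∃ i, x i = q := fun q hq => by
    obtain ⟨i, hi, rfl⟩ := List.mem_iff_getElem.1 (mem_toList.2 hq)
    exact ⟨⟨i, hi.trans_le (by simpa using hS)⟩, List.getD_eq_getElem _ _ hi⟩
  refine (optQuantError_le_sqrt_distortion μ x).trans (Real.sqrt_le_sqrt ?_)
  refine integral_mono_of_nonneg (ae_of_all _ fun y => Real.iInf_nonneg fun i => by positivity) hg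
    (ae_of_all _ fun y => ?_)
  obtain ⟨q, hq, hqy⟩ := hSg y
  obtain ⟨i, rfl⟩ := hx q hq
  exact (ciInf_le (Set.finite_range _).bddBelow i).trans hqy

theorem optQuantError_le_of_integral_rpow_le (hd : 1 ≤ d) {η : ℝ} (hη : 0 < η) :
    ∃ C : ℝ, 0 < C ∧ ∀ (μ : Measure (EuclideanSpace ℝ (Fin d))) [IsProbabilityMeasure μ],
      Integrable (fun y => ‖y‖ ^ (2 + η)) μ → ∀ (a : EuclideanSpace ℝ (Fin d)) {σ : ℝ}, 0 < σ →
        ∫ y, ‖y - a‖ ^ (2 + η) ∂μ ≤ σ ^ (2 + η) → ∀ {K : ℕ}, 1 ≤ K →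
          optQuantError μ K ≤ C * σ * (K : ℝ) ^ (-(1 : ℝ) / d) := by
  obtain ⟨C, hC, hcover⟩ := exists_finset_card_le_sq_dist_le_weight hd hη
  refine ⟨√(2 * C), by positivity, fun μ _ hint a σ hσ hmoment K hK => ?_⟩
  obtain ⟨S, hS, hSy⟩ := hcover a hσ hK
  have hK₀ : (0 : ℝ) < K := by exact_mod_cast hK
  set r := (K : ℝ) ^ (d : ℝ)⁻¹
  have hint_a := integrable_norm_sub_rpow (by linarith) hint a
  have hweight := ((integrable_const (σ ^ 2)).add (hint_a.const_mul (σ ^ (-η)))).const_mul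
    (C / r ^ 2)
  refine (optQuantError_le_sqrt_integral hS hweight hSy).trans ?_
  rw [integral_const_mul]
  calc √(C / r ^ 2 * ∫ y, (σ ^ 2 + σ ^ (-η) * ‖y - a‖ ^ (2 + η)) ∂μ)
      ≤ √(C / r ^ 2 * (2 * σ ^ 2)) := by
        gcongr
        exact integral_add_rpow_neg_mul_le hint_a hσ hmoment
    _ = √(2 * C) * σ * (K : ℝ) ^ (-(1 : ℝ) / d) := by
        have : C / r ^ 2 * (2 * σ ^ 2) = (√(2 * C) * σ * r⁻¹) ^ 2 := by
          rw [mul_pow, mul_pow, Real.sq_sqrt (by positivity)]; field_simp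
        rw [this, Real.sqrt_sq (by positivity), neg_div, Real.rpow_neg hK₀.le, one_div]

end

theorem stmt6 (d : ℕ) (hd : 1 ≤ d) (η : ℝ) (hη : 0 < η) :
    ∃ C : ℝ, 0 < C ∧
      ∀ μ : Measure (EuclideanSpace ℝ (Fin d)), IsProbabilityMeasure μ →
        Integrable (fun y => ‖y‖ ^ ((2 : ℝ) + η)) μ →
        ∀ K : ℕ, 1 ≤ K →
          optQuantError μ K ≤
            C * (⨅ a : EuclideanSpace ℝ (Fin d),
                  (∫ y, ‖y - a‖ ^ ((2 : ℝ) + η) ∂μ) ^ (1 / ((2 : ℝ) + η))) *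
              (K : ℝ) ^ (-(1 : ℝ) / d) := by
  obtain ⟨C, hC, hbound⟩ := optQuantError_le_of_integral_rpow_le hd hη
  refine ⟨C, hC, fun μ _ hint K hK => ?_⟩
  have hK₀ : (0 : ℝ) < K := by exact_mod_cast hK
  have hCK : 0 < C * (K : ℝ) ^ (-(1 : ℝ) / d) := by positivity
  rw [mul_right_comm, ← div_le_iff₀' hCK]
  refine le_ciInf fun a => le_of_forall_gt_imp_ge_of_dense fun σ hσ => ?_
  have hmoment : 0 ≤ ∫ y, ‖y - a‖ ^ ((2 : ℝ) + η) ∂μ := integral_nonneg fun y => by positivity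
  have hσ₀ : 0 < σ := (Real.rpow_nonneg hmoment _).trans_lt hσ
  rw [one_div, Real.rpow_inv_lt_iff_of_pos hmoment hσ₀.le (by linarith)] at hσ
  rw [div_le_iff₀' hCK, mul_right_comm]
  exact hbound μ hint a hσ₀ hσ.le hK
end

section
/- Fix a quantization level K ≥ 1 and a dimension d ≥ 1. Let ν and μ be probability measures on ℝ^d with finite second moments whose supports each contain at least K points. Let x ∈ (ℝ^d)^K be an optimal quantizer of ν at level K, i.e. a minimizer of G_{K,ν} over (ℝ^d)^K. Then G_{K,μ}(x) − inf_{z ∈ (ℝ^d)^K} G_{K,μ}(z) ≤ 4 e*_{K,μ} W₂(ν, μ) + 4 W₂(ν, μ)², where e*_{K,μ} = ( inf_{z ∈ (ℝ^d)^K} G_{K,μ}(z) )^{1/2}. -/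
/-!
The distortion of a grid `x` is the squared `L²(μ)` norm of the 1-Lipschitz function
`y ↦ infDist y (range x)`. Given a coupling `γ` of `ν` and `μ`, Minkowski's inequality in `L²(γ)`
therefore moves that norm by at most `b = (∫ ‖p.1 - p.2‖² dγ)^{1/2}` when `ν` is replaced by `μ`
or back.
For any grid `z`, optimality of `x` for `ν` gives
`√G_μ(x) ≤ √G_ν(x) + b ≤ √G_ν(z) + b ≤ √G_μ(z) + 2b`; taking the infimum over `z` and over `γ`
yields `√G_μ(x) ≤ e*_{K,μ} + 2 W₂(ν, μ)`, and squaring gives the bound.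
-/

open MeasureTheory

/-- Support of a measure: points all of whose neighborhoods have positive mass. -/
def msupport {d : ℕ} (μ : Measure (EuclideanSpace ℝ (Fin d))) : Set (EuclideanSpace ℝ (Fin d)) :=
  {y | ∀ ε > 0, 0 < μ (Metric.ball y ε)}

/-- `γ` is a coupling of `ν` and `μ`. -/
def IsCoupling {d : ℕ} (ν μ : Measure (EuclideanSpace ℝ (Fin d)))
    (γ : Measure (EuclideanSpace ℝ (Fin d) × EuclideanSpace ℝ (Fin d))) : Prop :=
  IsProbabilityMeasure γ ∧ γ.map Prod.fst = ν ∧ γ.map Prod.snd = μ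

/-- The Wasserstein-2 distance between two measures on `ℝ^d`. -/
noncomputable def W2 {d : ℕ} (ν μ : Measure (EuclideanSpace ℝ (Fin d))) : ℝ :=
  Real.sqrt (sInf {c : ℝ | ∃ γ, IsCoupling ν μ γ ∧ c = ∫ p, ‖p.1 - p.2‖ ^ 2 ∂γ})

open Set Metric

section Minkowski

variable {α : Type*} [MeasurableSpace α] {μ : Measure α}

theorem MeasureTheory.MemLp.sqrt_integral_sq_eq {f : α → ℝ} (hf : MemLp f 2 μ) :
    √(∫ a, f a ^ 2 ∂μ) = (eLpNorm f 2 μ).toReal := by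
  rw [hf.eLpNorm_eq_integral_rpow_norm two_ne_zero ENNReal.ofNat_ne_top,
    ENNReal.toReal_ofReal (by positivity), Real.sqrt_eq_rpow]
  simp

theorem sqrt_integral_sq_le_of_norm_le_add {u v w : α → ℝ} (hu : AEStronglyMeasurable u μ)
    (hv : MemLp v 2 μ) (hw : MemLp w 2 μ) (h : ∀ᵐ a ∂μ, ‖u a‖ ≤ ‖v a‖ + ‖w a‖) :
    √(∫ a, u a ^ 2 ∂μ) ≤ √(∫ a, v a ^ 2 ∂μ) + √(∫ a, w a ^ 2 ∂μ) := by
  have h' : ∀ᵐ a ∂μ, ‖u a‖ ≤ ‖‖v a‖ + ‖w a‖‖ := h.mono fun a ha => ha.trans (Real.le_norm_self _)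
  have hu2 : MemLp u 2 μ := (hv.norm.add hw.norm).mono hu h'
  rw [hu2.sqrt_integral_sq_eq, hv.sqrt_integral_sq_eq, hw.sqrt_integral_sq_eq,
    ← ENNReal.toReal_add hv.eLpNorm_ne_top hw.eLpNorm_ne_top]
  refine ENNReal.toReal_mono (ENNReal.add_ne_top.2 ⟨hv.eLpNorm_ne_top, hw.eLpNorm_ne_top⟩) ?_
  calc eLpNorm u 2 μ ≤ eLpNorm (fun a => ‖v a‖ + ‖w a‖) 2 μ := eLpNorm_mono_ae h'
    _ ≤ eLpNorm (fun a => ‖v a‖) 2 μ + eLpNorm (fun a => ‖w a‖) 2 μ :=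
      eLpNorm_add_le hv.norm.1 hw.norm.1 one_le_two
    _ = eLpNorm v 2 μ + eLpNorm w 2 μ := by rw [eLpNorm_norm, eLpNorm_norm]

end Minkowski

section Transport

variable {Ω E : Type*} [MeasurableSpace Ω] [PseudoMetricSpace E] [MeasurableSpace E]
  {P : Measure Ω} {X Y : Ω → E}

theorem sqrt_integral_sq_map_le_of_lipschitz {f : E → ℝ} (hf : LipschitzWith 1 f)
    (hX : AEMeasurable X P) (hY : AEMeasurable Y P) (hfX : MemLp f 2 (P.map X))
    (hfY : AEStronglyMeasurable f (P.map Y)) (hXY : MemLp (fun ω => dist (X ω) (Y ω)) 2 P) :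
    √(∫ y, f y ^ 2 ∂P.map Y) ≤
      √(∫ y, f y ^ 2 ∂P.map X) + √(∫ ω, dist (X ω) (Y ω) ^ 2 ∂P) := by
  rw [integral_map (f := fun y => f y ^ 2) hY (hfY.pow 2),
    integral_map (f := fun y => f y ^ 2) hX (hfX.1.pow 2)]
  refine sqrt_integral_sq_le_of_norm_le_add (hfY.comp_aemeasurable hY) (hfX.comp_of_map hX) hXY
    (ae_of_all _ fun ω => ?_)
  have hlip : dist (f (Y ω)) (f (X ω)) ≤ dist (Y ω) (X ω) := by
    simpa using hf.dist_le_mul (Y ω) (X ω)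
  calc ‖f (Y ω)‖ ≤ ‖f (X ω)‖ + ‖f (Y ω) - f (X ω)‖ := norm_le_norm_add_norm_sub' _ _
    _ ≤ ‖f (X ω)‖ + ‖dist (X ω) (Y ω)‖ := by
      rw [← dist_eq_norm, Real.norm_of_nonneg dist_nonneg, dist_comm (X ω)]
      gcongr

end Transport

section GridDistance

variable {E : Type*} [NormedAddCommGroup E]

theorem iInf_norm_sub_sq_eq_infDist_sq {ι : Type*} [Finite ι] [Nonempty ι] (x : ι → E) (y : E) :
    ⨅ i, ‖y - x i‖ ^ 2 = infDist y (range x) ^ 2 := by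
  obtain ⟨_, ⟨j, rfl⟩, hj⟩ := (finite_range x).isCompact.exists_infDist_eq_dist (range_nonempty x) y
  refine le_antisymm ?_ (le_ciInf fun i => ?_)
  · rw [hj, dist_eq_norm]
    exact ciInf_le (Finite.bddBelow_range _) j
  · rw [← dist_eq_norm]
    exact pow_le_pow_left₀ infDist_nonneg (infDist_le_dist_of_mem (mem_range_self i)) 2

theorem memLp_infDist [MeasurableSpace E] [OpensMeasurableSpace E] {p : ENNReal} {μ : Measure E}
    [IsFiniteMeasure μ] {s : Set E} (hs : s.Nonempty) (hμ : MemLp id p μ) :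
    MemLp (fun y => infDist y s) p μ := by
  obtain ⟨z, hz⟩ := hs
  refine (hμ.sub (memLp_const z)).norm.mono (continuous_infDist_pt s).aestronglyMeasurable
    (ae_of_all _ fun y => ?_)
  simp only [Real.norm_eq_abs, abs_norm, abs_of_nonneg infDist_nonneg, Pi.sub_apply, id]
  rw [← dist_eq_norm]
  exact infDist_le_dist_of_mem hz

end GridDistance

theorem le_sqrt_csInf {S : Set ℝ} {t : ℝ} (hS : S.Nonempty) (h : ∀ c ∈ S, t ≤ √c) :
    t ≤ √(sInf S) := by
  rcases le_or_gt t 0 with ht | ht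
  · exact ht.trans (Real.sqrt_nonneg _)
  · exact (Real.le_sqrt' ht).2 (le_csInf hS fun c hc => (Real.le_sqrt' ht).1 (h c hc))

theorem le_sqrt_ciInf {ι : Type*} [Nonempty ι] {f : ι → ℝ} {t : ℝ} (h : ∀ i, t ≤ √(f i)) :
    t ≤ √(⨅ i, f i) :=
  le_sqrt_csInf (range_nonempty f) (forall_mem_range.2 h)

section Quantization

variable {d K : ℕ}

local notation "E" => EuclideanSpace ℝ (Fin d)

theorem distortion_nonneg (μ : Measure E) (x : Fin K → E) : 0 ≤ distortion μ K x :=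
  integral_nonneg fun _ => Real.iInf_nonneg fun _ => sq_nonneg _

theorem distortion_eq_integral_infDist_sq [NeZero K] (μ : Measure E) (x : Fin K → E) :
    distortion μ K x = ∫ y, infDist y (range x) ^ 2 ∂μ := by
  simp only [distortion, iInf_norm_sub_sq_eq_infDist_sq]

theorem sqrt_distortion_map_le [NeZero K] {Ω : Type*} [MeasurableSpace Ω] {P : Measure Ω}
    [IsFiniteMeasure P] {X Y : Ω → E} (hX : MemLp X 2 P) (hY : MemLp Y 2 P) (x : Fin K → E) :
    √(distortion (P.map Y) K x) ≤
      √(distortion (P.map X) K x) + √(∫ ω, ‖X ω - Y ω‖ ^ 2 ∂P) := by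
  have hX' : MemLp id 2 (P.map X) :=
    (memLp_map_measure_iff aestronglyMeasurable_id hX.1.aemeasurable).2 hX
  simp only [distortion_eq_integral_infDist_sq, ← dist_eq_norm]
  exact sqrt_integral_sq_map_le_of_lipschitz (lipschitz_infDist_pt _) hX.1.aemeasurable
    hY.1.aemeasurable (memLp_infDist (range_nonempty x) hX')
    (continuous_infDist_pt _).aestronglyMeasurable
    (by simpa only [dist_eq_norm, Pi.sub_apply] using (hX.sub hY).norm)

theorem isCoupling_prod (ν μ : Measure E) [IsProbabilityMeasure ν] [IsProbabilityMeasure μ] :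
    IsCoupling ν μ (ν.prod μ) :=
  ⟨inferInstance, by simp, by simp⟩

theorem sqrt_distortion_le_of_isCoupling [NeZero K] {ν μ : Measure E} {γ : Measure (E × E)}
    (hγ : IsCoupling ν μ γ) (hν : MemLp id 2 ν) (hμ : MemLp id 2 μ) {x z : Fin K → E}
    (hxz : distortion ν K x ≤ distortion ν K z) :
    √(distortion μ K x) ≤ √(distortion μ K z) + 2 * √(∫ p, ‖p.1 - p.2‖ ^ 2 ∂γ) := by
  obtain ⟨hγP, hfst, hsnd⟩ := hγ
  have h1 : MemLp Prod.fst 2 γ := (hfst ▸ hν).comp_of_map measurable_fst.aemeasurable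
  have h2 : MemLp Prod.snd 2 γ := (hsnd ▸ hμ).comp_of_map measurable_snd.aemeasurable
  have hcost : ∫ p, ‖p.2 - p.1‖ ^ 2 ∂γ = ∫ p, ‖p.1 - p.2‖ ^ 2 ∂γ := by simp_rw [norm_sub_rev]
  calc √(distortion μ K x) ≤ √(distortion ν K x) + √(∫ p, ‖p.1 - p.2‖ ^ 2 ∂γ) := by
        simpa only [hfst, hsnd] using sqrt_distortion_map_le h1 h2 x
    _ ≤ √(distortion ν K z) + √(∫ p, ‖p.1 - p.2‖ ^ 2 ∂γ) := by gcongr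
    _ ≤ √(distortion μ K z) + √(∫ p, ‖p.1 - p.2‖ ^ 2 ∂γ) + √(∫ p, ‖p.1 - p.2‖ ^ 2 ∂γ) := by
        gcongr
        simpa only [hfst, hsnd, hcost] using sqrt_distortion_map_le h2 h1 z
    _ = _ := by ring

end Quantization

theorem stmt7_general (d K : ℕ) (hK : 1 ≤ K)
    (μ ν : Measure (EuclideanSpace ℝ (Fin d)))
    [IsProbabilityMeasure μ] [IsProbabilityMeasure ν]
    (hμ2 : Integrable (fun y => ‖y‖ ^ 2) μ)
    (hν2 : Integrable (fun y => ‖y‖ ^ 2) ν)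
    (x : Fin K → EuclideanSpace ℝ (Fin d))
    (hx : ∀ z : Fin K → EuclideanSpace ℝ (Fin d), distortion ν K x ≤ distortion ν K z) :
    distortion μ K x - (⨅ z : Fin K → EuclideanSpace ℝ (Fin d), distortion μ K z) ≤
      4 * Real.sqrt (⨅ z : Fin K → EuclideanSpace ℝ (Fin d), distortion μ K z) * W2 ν μ +
        4 * W2 ν μ ^ 2 := by
  have : NeZero K := ⟨by omega⟩
  have hμ := (memLp_two_iff_integrable_sq_norm aestronglyMeasurable_id).2 hμ2
  have hν := (memLp_two_iff_integrable_sq_norm aestronglyMeasurable_id).2 hν2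
  set I := ⨅ z, distortion μ K z
  have hI : 0 ≤ I := Real.iInf_nonneg fun z => distortion_nonneg μ z
  have hW : (√(distortion μ K x) - √I) / 2 ≤ W2 ν μ := by
    refine le_sqrt_csInf ⟨_, _, isCoupling_prod ν μ, rfl⟩ ?_
    rintro _ ⟨γ, hγ, rfl⟩
    have := le_sqrt_ciInf fun z => sub_le_iff_le_add.2
      (sqrt_distortion_le_of_isCoupling hγ hν hμ (hx z))
    linarith
  obtain ⟨-, hsq⟩ := Real.sqrt_le_iff.1 (show √(distortion μ K x) ≤ √I + 2 * W2 ν μ by linarith)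
  nlinarith [Real.sq_sqrt hI]

theorem stmt7 (d K : ℕ) (hd : 1 ≤ d) (hK : 1 ≤ K)
    (μ ν : Measure (EuclideanSpace ℝ (Fin d)))
    [IsProbabilityMeasure μ] [IsProbabilityMeasure ν]
    (hμ2 : Integrable (fun y => ‖y‖ ^ 2) μ)
    (hν2 : Integrable (fun y => ‖y‖ ^ 2) ν)
    (hμsupp : ∃ s : Finset (EuclideanSpace ℝ (Fin d)), K ≤ s.card ∧
      (s : Set (EuclideanSpace ℝ (Fin d))) ⊆ msupport μ)
    (hνsupp : ∃ s : Finset (EuclideanSpace ℝ (Fin d)), K ≤ s.card ∧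
      (s : Set (EuclideanSpace ℝ (Fin d))) ⊆ msupport ν)
    (x : Fin K → EuclideanSpace ℝ (Fin d))
    (hx : ∀ z : Fin K → EuclideanSpace ℝ (Fin d), distortion ν K x ≤ distortion ν K z) :
    distortion μ K x - (⨅ z : Fin K → EuclideanSpace ℝ (Fin d), distortion μ K z) ≤
      4 * Real.sqrt (⨅ z : Fin K → EuclideanSpace ℝ (Fin d), distortion μ K z) * W2 ν μ +
        4 * W2 ν μ ^ 2 :=
  stmt7_general d K hK μ ν hμ2 hν2 x hx
end

section
/- Let d, K ≥ 1, let μ be a probability measure on ℝ^d with finite second moment, and let x = (x₁,…,x_K) ∈ (ℝ^d)^K be such that the x_i are pairwise distinct and μ(∂C_i) = 0 for each Voronoi cell C_i of x. Then the quadratic distortion G_{K,μ} : (ℝ^d)^K → ℝ is (Fréchet) differentiable at x, and its derivative in the direction (h₁,…,h_K) equals Σ_{i=1}^K ⟨ 2 ∫_{C_i} (x_i − ξ) dμ(ξ), h_i ⟩; that is, the gradient of G_{K,μ} at x has i-th component 2 ∫_{C_i} (x_i − ξ) dμ(ξ). -/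
open MeasureTheory RealInnerProductSpace

/-- The Voronoi cell of the `i`-th point of the grid `x`. -/
noncomputable def voronoiCell {d K : ℕ} (x : Fin K → EuclideanSpace ℝ (Fin d)) (i : Fin K) :
    Set (EuclideanSpace ℝ (Fin d)) :=
  {y | ‖y - x i‖ = ⨅ j : Fin K, ‖y - x j‖}

/-!
Off the cell boundaries a point `y` has a unique nearest grid point `x i`, which stays its unique
nearest point for every grid `z` near `x`; there `z ↦ minⱼ ‖y - z j‖²` agrees with
`z ↦ ‖y - z i‖²`, whose derivative is `h ↦ ⟪2 (x i - y), h i⟫`. A point equidistant from two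
distinct grid points lies on a cell boundary, so this holds for `μ`-a.e. `y`, and the strict cells
agree with the Voronoi cells up to `μ`-null sets. As the integrand is Lipschitz in `z` near `x`
with the `μ`-integrable constant `2‖y‖ + 2‖x‖ + 1`, the derivative passes under the integral.
-/

open Filter Topology

theorem ciInf_eq_iff_forall_le {ι α : Type*} [Finite ι] [ConditionallyCompleteLinearOrder α]
    {f : ι → α} {i : ι} : ⨅ j, f j = f i ↔ ∀ j, f i ≤ f j := by
  have : Nonempty ι := ⟨i⟩
  exact ⟨fun h j => h ▸ ciInf_le (Finite.bddBelow_range f) j,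
    fun h => le_antisymm (ciInf_le (Finite.bddBelow_range f) i) (le_ciInf h)⟩

theorem abs_ciInf_sub_ciInf_le {ι : Type*} [Finite ι] [Nonempty ι] {f g : ι → ℝ} {c : ℝ}
    (h : ∀ i, |f i - g i| ≤ c) : |(⨅ i, f i) - ⨅ i, g i| ≤ c := by
  obtain ⟨i, hi⟩ := Finite.exists_min f
  obtain ⟨j, hj⟩ := Finite.exists_min g
  rw [ciInf_eq_iff_forall_le.2 hi, ciInf_eq_iff_forall_le.2 hj, abs_le]
  constructor
  · linarith [(abs_le.1 (h i)).1, hj i]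
  · linarith [(abs_le.1 (h j)).2, hi j]

section SeminormedAddCommGroup

variable {ι E : Type*} [SeminormedAddCommGroup E]

def strictCell (x : ι → E) (i : ι) : Set E :=
  {y | ∀ j ≠ i, ‖y - x i‖ < ‖y - x j‖}

theorem eq_of_mem_strictCell {x : ι → E} {i j : ι} {y : E} (hi : y ∈ strictCell x i)
    (hj : y ∈ strictCell x j) : i = j := by
  by_contra hij
  exact lt_asymm (hi j (Ne.symm hij)) (hj i hij)

theorem isOpen_strictCell [Finite ι] (x : ι → E) (i : ι) : IsOpen (strictCell x i) := by
  simp only [strictCell, Set.ofPred_forall]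
  exact isOpen_iInter_of_finite fun j => isOpen_iInter_of_finite fun _ =>
    isOpen_lt (by fun_prop) (by fun_prop)

theorem eventually_mem_strictCell [Finite ι] {x : ι → E} {i : ι} {y : E}
    (hy : y ∈ strictCell x i) : ∀ᶠ z in 𝓝 x, y ∈ strictCell z i :=
  eventually_all.2 fun j => eventually_imp_distrib_left.2 fun hj =>
    ContinuousAt.eventually_lt (continuous_const.sub (continuous_apply i)).norm.continuousAt
      (continuous_const.sub (continuous_apply j)).norm.continuousAt (hy j hj)

theorem iInf_norm_sub_sq_of_mem_strictCell [Finite ι] {x : ι → E} {i : ι} {y : E}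
    (hy : y ∈ strictCell x i) : ⨅ j, ‖y - x j‖ ^ 2 = ‖y - x i‖ ^ 2 := by
  refine ciInf_eq_iff_forall_le.2 fun j => ?_
  rcases eq_or_ne j i with rfl | hj
  · exact le_rfl
  · exact pow_le_pow_left₀ (norm_nonneg _) (hy j hj).le 2

theorem abs_norm_sub_sq_sub_norm_sub_sq_le (y a b : E) :
    |‖y - a‖ ^ 2 - ‖y - b‖ ^ 2| ≤ ‖a - b‖ * (‖y - a‖ + ‖y - b‖) := by
  rw [sq_sub_sq, abs_mul, abs_of_nonneg (by positivity), mul_comm]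
  gcongr
  simpa [norm_sub_rev a b] using abs_norm_sub_norm_le (y - a) (y - b)

theorem abs_iInf_norm_sub_sq_sub_le [Fintype ι] [Nonempty ι] (y : E) {x z : ι → E}
    (hz : ‖z - x‖ ≤ 1) :
    |(⨅ j, ‖y - z j‖ ^ 2) - ⨅ j, ‖y - x j‖ ^ 2| ≤ (2 * ‖y‖ + 2 * ‖x‖ + 1) * ‖z - x‖ := by
  refine abs_ciInf_sub_ciInf_le fun j => ?_
  have hzx : ‖z j - x j‖ ≤ ‖z - x‖ := norm_le_pi_norm (z - x) j
  calc _ ≤ ‖z j - x j‖ * (‖y - z j‖ + ‖y - x j‖) := abs_norm_sub_sq_sub_norm_sub_sq_le y _ _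
    _ ≤ ‖z - x‖ * (2 * ‖y‖ + 2 * ‖x‖ + 1) := by
      refine mul_le_mul hzx ?_ (by positivity) (norm_nonneg _)
      linarith [norm_sub_le y (z j), norm_sub_le y (x j), norm_sub_norm_le (z j) (x j),
        norm_le_pi_norm x j]
    _ = _ := mul_comm _ _

theorem integrable_iInf_norm_sub_sq [Finite ι] [Nonempty ι] [MeasurableSpace E]
    [OpensMeasurableSpace E] {μ : Measure E} [IsFiniteMeasure μ]
    (hμ2 : Integrable (fun y => ‖y‖ ^ 2) μ) (x : ι → E) :
    Integrable (fun y => ⨅ j, ‖y - x j‖ ^ 2) μ := by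
  obtain ⟨i⟩ := ‹Nonempty ι›
  refine ((hμ2.const_mul 2).add (integrable_const (2 * ‖x i‖ ^ 2))).mono'
    (Measurable.iInf fun j =>
      ((continuous_id.sub continuous_const).norm.pow 2).measurable).aestronglyMeasurable
    (ae_of_all _ fun y => ?_)
  have hnonneg : 0 ≤ ⨅ j, ‖y - x j‖ ^ 2 := le_ciInf fun j => by positivity
  rw [Real.norm_of_nonneg hnonneg]
  calc _ ≤ ‖y - x i‖ ^ 2 := ciInf_le (Finite.bddBelow_range _) i
    _ ≤ (‖y‖ + ‖x i‖) ^ 2 := by gcongr; exact norm_sub_le y (x i)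
    _ ≤ 2 * ‖y‖ ^ 2 + 2 * ‖x i‖ ^ 2 := by nlinarith [sq_nonneg (‖y‖ - ‖x i‖)]

end SeminormedAddCommGroup

section InnerProductSpace

variable {ι E : Type*} [Fintype ι] [NormedAddCommGroup E] [InnerProductSpace ℝ E]

variable (E) in
noncomputable def innerProjSL (i : ι) : E →L[ℝ] (ι → E) →L[ℝ] ℝ :=
  (ContinuousLinearMap.compL ℝ (ι → E) E ℝ).flip (ContinuousLinearMap.proj i) ∘L innerSL ℝ

@[simp]
theorem innerProjSL_apply (i : ι) (v : E) (h : ι → E) : innerProjSL E i v h = ⟪v, h i⟫ := rfl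

theorem hasFDerivAt_iInf_norm_sub_sq {x : ι → E} {i : ι} {y : E}
    (hy : y ∈ strictCell x i) :
    HasFDerivAt (fun z : ι → E => ⨅ j, ‖y - z j‖ ^ 2)
      (innerProjSL E i ((2 : ℝ) • (x i - y))) x := by
  have hsq : HasFDerivAt (fun z : ι → E => ‖y - z i‖ ^ 2)
      (innerProjSL E i ((2 : ℝ) • (x i - y))) x := by
    refine (((ContinuousLinearMap.proj i : (ι → E) →L[ℝ] E).hasFDerivAt).const_sub
      y).norm_sq.congr_fderiv ?_
    ext h
    simp
  refine hsq.congr_of_eventuallyEq ?_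
  filter_upwards [eventually_mem_strictCell hy] with z hz
  exact iInf_norm_sub_sq_of_mem_strictCell hz

theorem hasFDerivAt_iInf_norm_sub_sq_of_exists_mem_strictCell {x : ι → E} {y : E}
    (hy : ∃ i, y ∈ strictCell x i) :
    HasFDerivAt (fun z : ι → E => ⨅ j, ‖y - z j‖ ^ 2)
      (∑ i, innerProjSL E i ((strictCell x i).indicator (fun y => (2 : ℝ) • (x i - y)) y)) x := by
  obtain ⟨i, hi⟩ := hy
  convert hasFDerivAt_iInf_norm_sub_sq hi using 1
  refine (Finset.sum_eq_single i (fun j _ hji => ?_) (by simp)).trans ?_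
  · rw [Set.indicator_of_notMem (fun hj => hji (eq_of_mem_strictCell hj hi)), map_zero]
  · rw [Set.indicator_of_mem hi]

theorem mem_closure_setOf_norm_sub_lt {a b y : E} (hab : a ≠ b) (h : ‖y - a‖ = ‖y - b‖) :
    y ∈ closure {w | ‖w - b‖ < ‖w - a‖} := by
  have hlim : Tendsto (fun t : ℝ => y + t • (b - a)) (𝓝[>] 0) (𝓝 y) := by
    have : Continuous fun t : ℝ => y + t • (b - a) := by fun_prop
    simpa using (this.tendsto 0).mono_left nhdsWithin_le_nhds
  refine mem_closure_of_tendsto hlim (eventually_mem_nhdsWithin.mono fun t (ht : 0 < t) => ?_)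
  have hba : 0 < ‖b - a‖ := norm_pos_iff.2 (sub_ne_zero.2 hab.symm)
  have key : ‖y + t • (b - a) - b‖ ^ 2 = ‖y + t • (b - a) - a‖ ^ 2 - 2 * t * ‖b - a‖ ^ 2 := by
    have hyb : y - b = (y - a) - (b - a) := by abel
    rw [add_sub_right_comm, add_sub_right_comm, norm_add_sq_real, norm_add_sq_real, ← h, hyb,
      inner_sub_left, real_inner_smul_right, real_inner_smul_right, real_inner_self_eq_norm_sq]
    ring
  refine lt_of_pow_lt_pow_left₀ 2 (norm_nonneg _) ?_
  rw [key]
  exact sub_lt_self _ (by positivity)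

theorem hasFDerivAt_integral_iInf_norm_sub_sq [Nonempty ι] [MeasurableSpace E] [BorelSpace E]
    [SecondCountableTopology E] [CompleteSpace E] {μ : Measure E} [IsFiniteMeasure μ]
    (hμ2 : Integrable (fun y => ‖y‖ ^ 2) μ) {x : ι → E}
    (hx : ∀ᵐ y ∂μ, ∃ i, y ∈ strictCell x i) :
    HasFDerivAt (fun z : ι → E => ∫ y, ⨅ j, ‖y - z j‖ ^ 2 ∂μ)
      (∑ i, innerProjSL E i (∫ y in strictCell x i, (2 : ℝ) • (x i - y) ∂μ)) x := by
  -- without this shortcut `ContinuousENorm ((ι → E) →L[ℝ] ℝ)` is not found by instance search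
  let _ : NormedSpace ℝ E := InnerProductSpace.toNormedSpace
  have hid : Integrable id μ :=
    ((memLp_two_iff_integrable_sq_norm aestronglyMeasurable_id).2 hμ2).integrable one_le_two
  have hf_int : ∀ i, Integrable ((strictCell x i).indicator fun y => (2 : ℝ) • (x i - y)) μ :=
    fun i => (((integrable_const (x i)).sub hid).smul (2 : ℝ)).indicator
      (isOpen_strictCell x i).measurableSet
  have hF'_int : ∀ i, Integrable (fun y =>
      innerProjSL E i ((strictCell x i).indicator (fun y => (2 : ℝ) • (x i - y)) y)) μ :=
    fun i => (innerProjSL E i).integrable_comp (hf_int i)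
  have hlip : ∀ᵐ y ∂μ, ∀ z ∈ Metric.ball x 1,
      ‖(⨅ j, ‖y - z j‖ ^ 2) - ⨅ j, ‖y - x j‖ ^ 2‖ ≤ (2 * ‖y‖ + 2 * ‖x‖ + 1) * ‖z - x‖ :=
    ae_of_all _ fun y z hz => abs_iInf_norm_sub_sq_sub_le y (mem_ball_iff_norm.1 hz).le
  have hF'_meas : AEStronglyMeasurable (fun y =>
      ∑ i, innerProjSL E i ((strictCell x i).indicator (fun y => (2 : ℝ) • (x i - y)) y)) μ :=
    Finset.aestronglyMeasurable_fun_sum _ fun i _ => (hF'_int i).aestronglyMeasurable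
  have hD := (hasFDerivAt_integral_of_dominated_loc_of_lip' (Metric.ball_mem_nhds x one_pos)
    (fun z _ => (integrable_iInf_norm_sub_sq hμ2 z).aestronglyMeasurable)
    (integrable_iInf_norm_sub_sq hμ2 x) hF'_meas hlip
    (((hid.norm.const_mul 2).add (integrable_const _)).add (integrable_const _))
    (hx.mono fun _ => hasFDerivAt_iInf_norm_sub_sq_of_exists_mem_strictCell)).2
  refine hD.congr_fderiv ?_
  rw [integral_finsetSum _ fun i _ => hF'_int i]
  refine Finset.sum_congr rfl fun i _ => ?_
  rw [(innerProjSL E i).integral_comp_comm (hf_int i),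
    integral_indicator (isOpen_strictCell x i).measurableSet]

end InnerProductSpace

section Voronoi

variable {d K : ℕ} {x : Fin K → EuclideanSpace ℝ (Fin d)} {i j : Fin K}
  {y : EuclideanSpace ℝ (Fin d)}

theorem mem_voronoiCell_iff : y ∈ voronoiCell x i ↔ ∀ j, ‖y - x i‖ ≤ ‖y - x j‖ :=
  eq_comm.trans ciInf_eq_iff_forall_le

theorem exists_mem_voronoiCell [Nonempty (Fin K)] (x : Fin K → EuclideanSpace ℝ (Fin d))
    (y : EuclideanSpace ℝ (Fin d)) : ∃ i, y ∈ voronoiCell x i := by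
  obtain ⟨i, hi⟩ := Finite.exists_min fun j => ‖y - x j‖
  exact ⟨i, mem_voronoiCell_iff.2 hi⟩

theorem strictCell_subset_voronoiCell (x : Fin K → EuclideanSpace ℝ (Fin d)) (i : Fin K) :
    strictCell x i ⊆ voronoiCell x i := fun y hy => mem_voronoiCell_iff.2 fun j => by
  rcases eq_or_ne j i with rfl | hj
  exacts [le_rfl, (hy j hj).le]

theorem mem_frontier_voronoiCell (hij : x i ≠ x j) (hi : y ∈ voronoiCell x i)
    (hj : y ∈ voronoiCell x j) : y ∈ frontier (voronoiCell x i) := by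
  rw [frontier_eq_closure_inter_closure]
  refine ⟨subset_closure hi, closure_mono (fun w hw hwi => ?_) (mem_closure_setOf_norm_sub_lt hij
    (le_antisymm (mem_voronoiCell_iff.1 hi j) (mem_voronoiCell_iff.1 hj i)))⟩
  exact (mem_voronoiCell_iff.1 hwi j).not_gt hw

theorem voronoiCell_diff_strictCell_subset_frontier (hx : Function.Injective x) (i : Fin K) :
    voronoiCell x i \ strictCell x i ⊆ frontier (voronoiCell x i) := by
  rintro y ⟨hi, hs⟩
  simp only [strictCell, Set.mem_ofPred_eq, not_forall, not_lt] at hs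
  obtain ⟨j, hji, hle⟩ := hs
  have hj : y ∈ voronoiCell x j :=
    mem_voronoiCell_iff.2 fun k => hle.trans (mem_voronoiCell_iff.1 hi k)
  exact mem_frontier_voronoiCell (hx.ne (Ne.symm hji)) hi hj

theorem strictCell_ae_eq_voronoiCell {μ : Measure (EuclideanSpace ℝ (Fin d))}
    (hx : Function.Injective x) (hμ : μ (frontier (voronoiCell x i)) = 0) :
    strictCell x i =ᵐ[μ] voronoiCell x i :=
  (strictCell_subset_voronoiCell x i).eventuallyLE.antisymm
    (ae_le_set.2 (measure_mono_null (voronoiCell_diff_strictCell_subset_frontier hx i) hμ))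

theorem ae_exists_mem_strictCell [Nonempty (Fin K)] {μ : Measure (EuclideanSpace ℝ (Fin d))}
    (hx : Function.Injective x) (hμ : ∀ i, μ (frontier (voronoiCell x i)) = 0) :
    ∀ᵐ y ∂μ, ∃ i, y ∈ strictCell x i := by
  filter_upwards [ae_all_iff.2 fun i => (strictCell_ae_eq_voronoiCell hx (hμ i)).mem_iff]
    with y hy
  obtain ⟨i, hi⟩ := exists_mem_voronoiCell x y
  exact ⟨i, (hy i).2 hi⟩

end Voronoi

theorem stmt8_general (d K : ℕ) (hK : 1 ≤ K)
    (μ : Measure (EuclideanSpace ℝ (Fin d))) [IsProbabilityMeasure μ]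
    (hμ2 : Integrable (fun y => ‖y‖ ^ 2) μ)
    (x : Fin K → EuclideanSpace ℝ (Fin d)) (hx : Function.Injective x)
    (hbd : ∀ i, μ (frontier (voronoiCell x i)) = 0) :
    ∃ D : (Fin K → EuclideanSpace ℝ (Fin d)) →L[ℝ] ℝ,
      HasFDerivAt (fun z : Fin K → EuclideanSpace ℝ (Fin d) => distortion μ K z) D x ∧
      ∀ h : Fin K → EuclideanSpace ℝ (Fin d),
        D h = ∑ i : Fin K, ⟪(2 : ℝ) • ∫ ξ in voronoiCell x i, (x i - ξ) ∂μ, h i⟫ := by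
  have : Nonempty (Fin K) := ⟨⟨0, hK⟩⟩
  refine ⟨∑ i, innerProjSL (EuclideanSpace ℝ (Fin d)) i
    (∫ ξ in voronoiCell x i, (2 : ℝ) • (x i - ξ) ∂μ), ?_,
    fun h => by simp [integral_smul, real_inner_smul_left]⟩
  have hD := hasFDerivAt_integral_iInf_norm_sub_sq hμ2 (ae_exists_mem_strictCell hx hbd)
  simp only [setIntegral_congr_set (strictCell_ae_eq_voronoiCell hx (hbd _))] at hD
  exact hD

theorem stmt8 (d K : ℕ) (hd : 1 ≤ d) (hK : 1 ≤ K)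
    (μ : Measure (EuclideanSpace ℝ (Fin d))) [IsProbabilityMeasure μ]
    (hμ2 : Integrable (fun y => ‖y‖ ^ 2) μ)
    (x : Fin K → EuclideanSpace ℝ (Fin d)) (hx : Function.Injective x)
    (hbd : ∀ i, μ (frontier (voronoiCell x i)) = 0) :
    ∃ D : (Fin K → EuclideanSpace ℝ (Fin d)) →L[ℝ] ℝ,
      HasFDerivAt (fun z : Fin K → EuclideanSpace ℝ (Fin d) => distortion μ K z) D x ∧
      ∀ h : Fin K → EuclideanSpace ℝ (Fin d),
        D h = ∑ i : Fin K, ⟪(2 : ℝ) • ∫ ξ in voronoiCell x i, (x i - ξ) ∂μ, h i⟫ :=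
  stmt8_general d K hK μ hμ2 x hx hbd
end

section
/- Let d ≥ 1, R > 0, t > 0, and let μ be a probability measure on ℝ^d whose support is contained in the closed ball of radius R centered at the origin. Define p_t(x) = ∫_{ℝ^d} (2πt)^{−d/2} exp(−‖x−z‖²/(2t)) dμ(z), the density of the convolution μ * N(0, t·I_d). Then p_t is everywhere strictly positive, log p_t is differentiable, and for all x, y ∈ ℝ^d, ⟨ x − y, ∇ log p_t(x) − ∇ log p_t(y) ⟩ ≤ (R²/t² − 1/t) ‖x − y‖². -/
/-!
`p_t` is a positive multiple of `Z(x) = ∫ exp (-‖x - z‖² / (2t)) dμ(z)`. Differentiating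
under the integral gives Tweedie's formula `∇ log Z(x) = (m(x) - x) / t`, where `m(x)` is the
mean of `z` under the tilted probability measure `∝ exp (-‖x - z‖² / (2t)) dμ(z)`. Along a line
`x = y + l u`, the derivative of `⟪m(x), u⟫` in `l` is `1/t` times the variance of `⟪z, u⟫`
under the tilted measure, which is at most `R² ‖u‖²` since `μ` lives on the ball of radius `R`.
Integrating over `l ∈ [0, 1]` gives `⟪x - y, m(x) - m(y)⟫ ≤ R² ‖x - y‖² / t`.
-/

open MeasureTheory Real RealInnerProductSpace

open InnerProductSpace

/-- For the moments `D, N, Q` of order `0, 1, 2` of a tilted family of measures,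
`(N / D)' = c (Q D - N²) / D²` is `c` times a variance, which is at most `c b`. -/
lemma div_sub_div_le_of_hasDerivAt {D N Q a : ℝ → ℝ} {b c : ℝ} (hc : 0 ≤ c)
    (hD : ∀ l, 0 < D l) (hD' : ∀ l, HasDerivAt D (c * (N l - a l * D l)) l)
    (hN' : ∀ l, HasDerivAt N (c * (Q l - a l * N l)) l) (hQ : ∀ l, Q l ≤ b * D l) :
    N 1 / D 1 - N 0 / D 0 ≤ c * b := by
  have hderiv (l : ℝ) :
      HasDerivAt (fun l => N l / D l) (c * ((Q l * D l - N l ^ 2) / D l ^ 2)) l := by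
    refine ((hN' l).div (hD' l) (hD l).ne').congr_deriv ?_
    ring
  have hle (l : ℝ) : c * ((Q l * D l - N l ^ 2) / D l ^ 2) ≤ c * b := by
    have := hD l
    gcongr
    rw [div_le_iff₀ (by positivity)]
    nlinarith [hQ l, sq_nonneg (N l)]
  simpa using image_sub_le_mul_sub_of_deriv_le (fun l => (hderiv l).differentiableAt)
    (fun l => (hderiv l).deriv ▸ hle l) zero_le_one

section GaussKernel

variable {E : Type*} [NormedAddCommGroup E]

noncomputable def gaussKernel (t : ℝ) (x z : E) : ℝ := exp (-‖x - z‖ ^ 2 / (2 * t))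

lemma gaussKernel_pos (t : ℝ) (x z : E) : 0 < gaussKernel t x z := exp_pos _

lemma gaussKernel_le_one {t : ℝ} (ht : 0 ≤ t) (x z : E) : gaussKernel t x z ≤ 1 :=
  exp_le_one_iff.2 <|
    div_nonpos_of_nonpos_of_nonneg (neg_nonpos.2 (by positivity)) (by positivity)

lemma continuous_gaussKernel (t : ℝ) (x : E) : Continuous (gaussKernel t x) := by
  unfold gaussKernel; fun_prop

/-- Squared, this is `s ≤ exp s` for `s = ‖z - x‖² / t`. -/
lemma norm_sub_mul_gaussKernel_le {t : ℝ} (ht : 0 < t) (x z : E) :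
    ‖z - x‖ * gaussKernel t x z ≤ √t := by
  refine (le_sqrt (by positivity [gaussKernel_pos t x z]) ht.le).2 ?_
  have hexp : gaussKernel t x z ^ 2 * exp (‖x - z‖ ^ 2 / t) = 1 := by
    rw [gaussKernel, ← exp_nat_mul, ← exp_add]; field_simp; simp
  have hle : ‖x - z‖ ^ 2 / t ≤ exp (‖x - z‖ ^ 2 / t) := by
    linarith [add_one_le_exp (‖x - z‖ ^ 2 / t)]
  rw [norm_sub_rev, mul_pow]
  calc ‖x - z‖ ^ 2 * gaussKernel t x z ^ 2
      = t * (‖x - z‖ ^ 2 / t) * gaussKernel t x z ^ 2 := by field_simp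
    _ ≤ t * exp (‖x - z‖ ^ 2 / t) * gaussKernel t x z ^ 2 := by gcongr
    _ = t := by rw [mul_assoc, mul_comm (exp _), hexp, mul_one]

lemma norm_mul_gaussKernel_smul_sub_le [NormedSpace ℝ E] {t : ℝ} (ht : 0 < t) (a : ℝ)
    (x z : E) :
    ‖(a * gaussKernel t x z / t) • (z - x)‖ ≤ |a| * √t / t := by
  rw [norm_smul, norm_div, norm_mul, norm_eq_abs, norm_of_nonneg (gaussKernel_pos t x z).le,
    norm_of_nonneg ht.le]
  calc |a| * gaussKernel t x z / t * ‖z - x‖ = |a| * (‖z - x‖ * gaussKernel t x z) / t := by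
        ring
    _ ≤ |a| * √t / t := by gcongr; exact norm_sub_mul_gaussKernel_le ht x z

lemma hasGradientAt_gaussKernel [InnerProductSpace ℝ E] [CompleteSpace E] (t : ℝ) (x z : E) :
    HasGradientAt (fun x => gaussKernel t x z) ((gaussKernel t x z / t) • (z - x)) x := by
  have h : HasFDerivAt (fun x => ‖x - z‖ ^ 2) (2 • innerSL ℝ (x - z)) x := by
    simpa using ((hasFDerivAt_id x).sub_const z).norm_sq
  have hK (x : E) : gaussKernel t x z = exp (‖x - z‖ ^ 2 * -(2 * t)⁻¹) := by
    rw [gaussKernel]; ring_nf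
  simp only [hasGradientAt_iff_hasFDerivAt, hK]
  refine (h.mul_const _).exp.congr_fderiv ?_
  ext w
  simp only [smul_apply, smul_eq_mul, nsmul_eq_mul, coe_innerSL_apply, toDual_apply_apply,
    inner_sub_left, real_inner_smul_left]
  ring

end GaussKernel

section Integrable

variable {E : Type*} [NormedAddCommGroup E] [MeasurableSpace E] [OpensMeasurableSpace E]
  {μ : Measure E} [IsFiniteMeasure μ] {t : ℝ}

lemma integrable_mul_gaussKernel {g : E → ℝ} {C : ℝ} (ht : 0 ≤ t)
    (hg : AEStronglyMeasurable g μ) (hgC : ∀ᵐ z ∂μ, |g z| ≤ C) (x : E) :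
    Integrable (fun z => g z * gaussKernel t x z) μ := by
  refine (integrable_const C).mono'
    (hg.mul (continuous_gaussKernel t x).aestronglyMeasurable) ?_
  filter_upwards [hgC] with z hz
  rw [norm_mul, norm_eq_abs, norm_of_nonneg (gaussKernel_pos t x z).le]
  nlinarith [gaussKernel_le_one ht x z, gaussKernel_pos t x z, abs_nonneg (g z)]

lemma integrable_gaussKernel (ht : 0 ≤ t) (x : E) : Integrable (gaussKernel t x) μ := by
  simpa using integrable_mul_gaussKernel (g := fun _ => 1) ht aestronglyMeasurable_const
    (.of_forall fun _ => abs_one.le) x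

lemma integral_gaussKernel_pos [NeZero μ] (ht : 0 ≤ t) (x : E) :
    0 < ∫ z, gaussKernel t x z ∂μ :=
  integral_exp_pos (integrable_gaussKernel ht x)

lemma integrable_mul_gaussKernel_smul_sub [NormedSpace ℝ E] [SecondCountableTopology E]
    {g : E → ℝ} {C : ℝ} (ht : 0 < t) (hg : AEStronglyMeasurable g μ)
    (hgC : ∀ᵐ z ∂μ, |g z| ≤ C) (x : E) :
    Integrable (fun z => (g z * gaussKernel t x z / t) • (z - x)) μ := by
  refine (integrable_const (C * √t / t)).mono' ?_ ?_
  · exact ((hg.mul (continuous_gaussKernel t x).aestronglyMeasurable).mul_const t⁻¹).smul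
      (continuous_id.sub continuous_const).aestronglyMeasurable
  · filter_upwards [hgC] with z hz
    exact (norm_mul_gaussKernel_smul_sub_le ht _ x z).trans (by gcongr)

end Integrable

lemma ae_abs_inner_le {E : Type*} [NormedAddCommGroup E] [InnerProductSpace ℝ E]
    [MeasurableSpace E] {μ : Measure E} {R : ℝ} (hR : ∀ᵐ z ∂μ, ‖z‖ ≤ R) (u : E) :
    ∀ᵐ z ∂μ, |⟪z, u⟫| ≤ R * ‖u‖ := by
  filter_upwards [hR] with z hz
  exact (abs_real_inner_le_norm z u).trans (by gcongr)

section Gradient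

variable {E : Type*} [NormedAddCommGroup E] [InnerProductSpace ℝ E] [CompleteSpace E]
  [SecondCountableTopology E] [MeasurableSpace E] [OpensMeasurableSpace E]
  {μ : Measure E} [IsFiniteMeasure μ] {t R C : ℝ} {g : E → ℝ}

lemma hasGradientAt_integral_mul_gaussKernel (ht : 0 < t) (hg : AEStronglyMeasurable g μ)
    (hgC : ∀ᵐ z ∂μ, |g z| ≤ C) (x : E) :
    HasGradientAt (fun x => ∫ z, g z * gaussKernel t x z ∂μ)
      (∫ z, (g z * gaussKernel t x z / t) • (z - x) ∂μ) x := by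
  set G : E → E → E := fun x z => (g z * gaussKernel t x z / t) • (z - x)
  have hG_le : ∀ᵐ z ∂μ, ∀ x ∈ Set.univ, ‖toDual ℝ E (G x z)‖ ≤ C * √t / t := by
    filter_upwards [hgC] with z hz x _
    rw [LinearIsometryEquiv.norm_map]
    exact (norm_mul_gaussKernel_smul_sub_le ht _ x z).trans (by gcongr)
  have hderiv := hasFDerivAt_integral_of_dominated_of_fderiv_le (𝕜 := ℝ) (μ := μ) (x₀ := x)
    (F := fun x z => g z * gaussKernel t x z) (F' := fun x z => toDual ℝ E (G x z))
    Filter.univ_mem (.of_forall fun x => hg.mul (continuous_gaussKernel t x).aestronglyMeasurable)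
    (integrable_mul_gaussKernel ht.le hg hgC x)
    ((toDual ℝ E).continuous.comp_aestronglyMeasurable
      (integrable_mul_gaussKernel_smul_sub ht hg hgC x).aestronglyMeasurable)
    hG_le (integrable_const _)
    (.of_forall fun z x _ =>
      ((hasGradientAt_gaussKernel t x z).hasFDerivAt.const_mul (g z)).congr_fderiv
        (by rw [← map_smul]; simp only [G, smul_smul, mul_div_assoc]))
  rw [hasGradientAt_iff_hasFDerivAt]
  exact hderiv.congr_fderiv ((toDual ℝ E).toLinearIsometry.integral_comp_comm (G x))

lemma inner_integral_mul_gaussKernel_smul_sub (ht : 0 < t) (hR : ∀ᵐ z ∂μ, ‖z‖ ≤ R)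
    (hg : AEStronglyMeasurable g μ) (hgC : ∀ᵐ z ∂μ, |g z| ≤ C) (x u : E) :
    ⟪∫ z, (g z * gaussKernel t x z / t) • (z - x) ∂μ, u⟫ =
      t⁻¹ * (∫ z, g z * ⟪z, u⟫ * gaussKernel t x z ∂μ -
        ⟪x, u⟫ * ∫ z, g z * gaussKernel t x z ∂μ) := by
  have hgu : ∀ᵐ z ∂μ, |g z * ⟪z, u⟫| ≤ C * (R * ‖u‖) := by
    filter_upwards [hgC, ae_abs_inner_le hR u] with z hz hzu
    rw [abs_mul]
    exact mul_le_mul hz hzu (abs_nonneg _) ((abs_nonneg _).trans hz)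
  have hint := integrable_mul_gaussKernel (g := fun z => g z * ⟪z, u⟫) ht.le
    (hg.mul (continuous_id.inner continuous_const).aestronglyMeasurable) hgu x
  have hintegrand : (fun z => ⟪u, (g z * gaussKernel t x z / t) • (z - x)⟫) =
      fun z => t⁻¹ * (g z * ⟪z, u⟫ * gaussKernel t x z -
        ⟪x, u⟫ * (g z * gaussKernel t x z)) := by
    funext z
    rw [real_inner_smul_right, inner_sub_right, real_inner_comm z, real_inner_comm x]
    ring
  rw [real_inner_comm, ← integral_inner (integrable_mul_gaussKernel_smul_sub ht hg hgC x),
    hintegrand, integral_const_mul,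
    integral_sub hint ((integrable_mul_gaussKernel ht.le hg hgC x).const_mul _), integral_const_mul]

lemma hasDerivAt_integral_mul_gaussKernel_line (ht : 0 < t) (hR : ∀ᵐ z ∂μ, ‖z‖ ≤ R)
    (hg : AEStronglyMeasurable g μ) (hgC : ∀ᵐ z ∂μ, |g z| ≤ C) (y u : E) (l : ℝ) :
    HasDerivAt (fun l => ∫ z, g z * gaussKernel t (y + l • u) z ∂μ)
      (t⁻¹ * (∫ z, g z * ⟪z, u⟫ * gaussKernel t (y + l • u) z ∂μ -
        ⟪y + l • u, u⟫ * ∫ z, g z * gaussKernel t (y + l • u) z ∂μ)) l := by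
  have hline : HasDerivAt (fun l : ℝ => y + l • u) u l := by
    simpa using ((hasDerivAt_id l).smul_const u).const_add y
  have := (hasGradientAt_integral_mul_gaussKernel ht hg hgC (y + l • u)).hasFDerivAt
    |>.comp_hasDerivAt l hline
  rwa [toDual_apply_apply, inner_integral_mul_gaussKernel_smul_sub ht hR hg hgC] at this

end Gradient

section Score

variable {E : Type*} [NormedAddCommGroup E] [InnerProductSpace ℝ E] [CompleteSpace E]
  [SecondCountableTopology E] [MeasurableSpace E] [OpensMeasurableSpace E]
  {μ : Measure E} [IsFiniteMeasure μ] [NeZero μ] {t R : ℝ}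

noncomputable def gaussScore (μ : Measure E) (t : ℝ) (x : E) : E :=
  (∫ z, gaussKernel t x z ∂μ)⁻¹ • ∫ z, (gaussKernel t x z / t) • (z - x) ∂μ

lemma hasGradientAt_log_integral_gaussKernel (ht : 0 < t) (x : E) :
    HasGradientAt (fun x => log (∫ z, gaussKernel t x z ∂μ)) (gaussScore μ t x) x := by
  have h := hasGradientAt_integral_mul_gaussKernel (μ := μ) (g := fun _ => 1) ht
    aestronglyMeasurable_const (.of_forall fun _ => abs_one.le) x
  simp only [one_mul, hasGradientAt_iff_hasFDerivAt] at h ⊢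
  exact (h.log (integral_gaussKernel_pos ht.le x).ne').congr_fderiv
    (by rw [gaussScore, map_smul])

lemma inner_gaussScore (ht : 0 < t) (hR : ∀ᵐ z ∂μ, ‖z‖ ≤ R) (x u : E) :
    ⟪gaussScore μ t x, u⟫ =
      t⁻¹ * ((∫ z, ⟪z, u⟫ * gaussKernel t x z ∂μ) / (∫ z, gaussKernel t x z ∂μ) -
        ⟪x, u⟫) := by
  have h := inner_integral_mul_gaussKernel_smul_sub (g := fun _ => 1) ht hR
    aestronglyMeasurable_const (.of_forall fun _ => abs_one.le) x u
  simp only [one_mul] at h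
  rw [gaussScore, real_inner_smul_left, h]
  have := (integral_gaussKernel_pos (μ := μ) ht.le x).ne'
  field_simp

lemma inner_sub_gaussScore_le (ht : 0 < t) (hR : ∀ᵐ z ∂μ, ‖z‖ ≤ R) (x y : E) :
    ⟪x - y, gaussScore μ t x - gaussScore μ t y⟫ ≤
      (R ^ 2 / t ^ 2 - 1 / t) * ‖x - y‖ ^ 2 := by
  obtain ⟨u, rfl⟩ : ∃ u, x = y + u := ⟨x - y, by abel⟩
  rw [add_sub_cancel_left]
  have hu : ∀ᵐ z ∂μ, |⟪z, u⟫| ≤ R * ‖u‖ := ae_abs_inner_le hR u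
  have hD' := hasDerivAt_integral_mul_gaussKernel_line (g := fun _ => 1) ht hR
    aestronglyMeasurable_const (.of_forall fun _ => abs_one.le) y u
  have hN' := hasDerivAt_integral_mul_gaussKernel_line (g := fun z => ⟪z, u⟫) ht hR
    (continuous_id.inner continuous_const).aestronglyMeasurable hu y u
  simp only [one_mul] at hD'
  have hQ (l : ℝ) : ∫ z, ⟪z, u⟫ * ⟪z, u⟫ * gaussKernel t (y + l • u) z ∂μ ≤
      (R * ‖u‖) ^ 2 * ∫ z, gaussKernel t (y + l • u) z ∂μ := by
    rw [← integral_const_mul]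
    refine integral_mono_of_nonneg (.of_forall fun z => ?_)
      ((integrable_gaussKernel ht.le _).const_mul _) ?_
    · exact mul_nonneg (mul_self_nonneg _) (gaussKernel_pos t _ z).le
    · filter_upwards [hu] with z hz
      refine mul_le_mul_of_nonneg_right ?_ (gaussKernel_pos t _ z).le
      rw [← abs_mul_abs_self, sq]
      exact mul_self_le_mul_self (abs_nonneg _) hz
  have key := div_sub_div_le_of_hasDerivAt (inv_nonneg.2 ht.le)
    (fun l => integral_gaussKernel_pos ht.le _) hD' hN' hQ
  simp only [one_smul, zero_smul, add_zero] at key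
  rw [inner_sub_right, real_inner_comm (gaussScore μ t _), real_inner_comm (gaussScore μ t y),
    inner_gaussScore ht hR, inner_gaussScore ht hR, inner_add_left, real_inner_self_eq_norm_sq]
  linear_combination t⁻¹ * key

end Score

lemma ae_mem_msupport {d : ℕ} (μ : Measure (EuclideanSpace ℝ (Fin d))) :
    ∀ᵐ z ∂μ, z ∈ msupport μ := by
  refine measure_null_of_locally_null _ fun x hx => ?_
  obtain ⟨ε, hε, hball⟩ : ∃ ε > 0, μ (Metric.ball x ε) ≤ 0 := by
    simpa [msupport] using hx
  exact ⟨Metric.ball x ε, mem_nhdsWithin_of_mem_nhds (Metric.ball_mem_nhds x hε),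
    nonpos_iff_eq_zero.1 hball⟩

theorem stmt9_general (d : ℕ) (R t : ℝ) (ht : 0 < t)
    (μ : Measure (EuclideanSpace ℝ (Fin d))) [IsProbabilityMeasure μ]
    (hμsupp : msupport μ ⊆ Metric.closedBall 0 R)
    (p : EuclideanSpace ℝ (Fin d) → ℝ)
    (hp : ∀ x, p x = ∫ z, (2 * π * t) ^ (-(d : ℝ) / 2) *
      Real.exp (-‖x - z‖ ^ 2 / (2 * t)) ∂μ) :
    (∀ x, 0 < p x) ∧
    (Differentiable ℝ fun x => Real.log (p x)) ∧
    ∀ x y : EuclideanSpace ℝ (Fin d),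
      ⟪x - y, gradient (fun z => Real.log (p z)) x - gradient (fun z => Real.log (p z)) y⟫ ≤
        (R ^ 2 / t ^ 2 - 1 / t) * ‖x - y‖ ^ 2 := by
  set c : ℝ := (2 * π * t) ^ (-(d : ℝ) / 2)
  have hc : 0 < c := by positivity
  have hpZ (x) : p x = c * ∫ z, gaussKernel t x z ∂μ := by
    rw [hp, ← integral_const_mul]; rfl
  have hZ (x) := integral_gaussKernel_pos (μ := μ) ht.le x
  have hgrad (x) : HasGradientAt (fun x => log (p x)) (gaussScore μ t x) x := by
    simp only [hpZ, log_mul hc.ne' (hZ _).ne', hasGradientAt_iff_hasFDerivAt]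
    exact (hasGradientAt_log_integral_gaussKernel ht x).hasFDerivAt.const_add _
  have hR : ∀ᵐ z ∂μ, ‖z‖ ≤ R := (ae_mem_msupport μ).mono fun z hz => by
    simpa using hμsupp hz
  refine ⟨fun x => hpZ x ▸ mul_pos hc (hZ x), fun x => (hgrad x).differentiableAt,
    fun x y => ?_⟩
  rw [(hgrad x).gradient, (hgrad y).gradient]
  exact inner_sub_gaussScore_le ht hR x y

theorem stmt9 (d : ℕ) (hd : 1 ≤ d) (R t : ℝ) (hR : 0 < R) (ht : 0 < t)
    (μ : Measure (EuclideanSpace ℝ (Fin d))) [IsProbabilityMeasure μ]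
    (hμsupp : msupport μ ⊆ Metric.closedBall 0 R)
    (p : EuclideanSpace ℝ (Fin d) → ℝ)
    (hp : ∀ x, p x = ∫ z, (2 * π * t) ^ (-(d : ℝ) / 2) *
      Real.exp (-‖x - z‖ ^ 2 / (2 * t)) ∂μ) :
    (∀ x, 0 < p x) ∧
    (Differentiable ℝ fun x => Real.log (p x)) ∧
    ∀ x y : EuclideanSpace ℝ (Fin d),
      ⟪x - y, gradient (fun z => Real.log (p z)) x - gradient (fun z => Real.log (p z)) y⟫ ≤
        (R ^ 2 / t ^ 2 - 1 / t) * ‖x - y‖ ^ 2 :=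
  stmt9_general d R t ht μ hμsupp p hp
end

section
/- Let d ≥ 1, R > 0, t > 0, set s = 1 − e^{−t} ∈ (0,1), and let μ be a probability measure on ℝ^d whose support is contained in the closed ball of radius R centered at the origin. Define q(x) = ∫_{ℝ^d} (2πs)^{−d/2} exp(−‖x − e^{−t/2} z‖²/(2s)) dμ(z), the density of the law of e^{−t/2} X + Z where X ∼ μ and Z ∼ N(0, s·I_d) are independent. Then q is everywhere strictly positive, log q is differentiable, and for all x, y ∈ ℝ^d, ⟨ x − y, ∇ log q(x) − ∇ log q(y) ⟩ ≤ ( R² e^{−t} / s² − 1/s ) ‖x − y‖². -/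
/-!
Along a line `y + τ • u`, expanding the square in the Gaussian kernel writes `log q` as the
concave quadratic `-τ² ‖u‖² / (2s)` plus, up to a constant, the cumulant generating function of
`Z = ⟪u, e^{-t/2} z - y⟫ / s` under `μ` reweighted by `exp (-‖y - e^{-t/2} z‖² / (2s))`.
The second derivative of a cumulant generating function is the variance of `Z` under an
exponentially tilted measure. Since `Z` takes values in an interval of length
`2 e^{-t/2} R ‖u‖ / s`, Popoviciu's inequality bounds this variance by `e^{-t} R² ‖u‖² / s²`.
-/

open MeasureTheory Real RealInnerProductSpace

lemma ae_norm_le_of_msupport_subset_closedBall {d : ℕ} {μ : Measure (EuclideanSpace ℝ (Fin d))}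
    {R : ℝ} (h : msupport μ ⊆ Metric.closedBall 0 R) : ∀ᵐ z ∂μ, ‖z‖ ≤ R := by
  have hnull : μ (Metric.closedBall 0 R)ᶜ = 0 := by
    refine measure_null_of_locally_null _ fun z hz ↦ ?_
    obtain ⟨ε, hε, hμε⟩ : ∃ ε > 0, ¬0 < μ (Metric.ball z ε) := by
      simpa [msupport] using fun hz' ↦ hz (h hz')
    exact ⟨Metric.ball z ε, mem_nhdsWithin_of_mem_nhds (Metric.ball_mem_nhds z hε),
      nonpos_iff_eq_zero.1 (not_lt.1 hμε)⟩
  filter_upwards [measure_eq_zero_iff_ae_notMem.1 hnull] with z hz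
  simpa using hz

namespace ProbabilityTheory

variable {Ω : Type*} [MeasurableSpace Ω] {ν : Measure Ω} [IsFiniteMeasure ν] {X : Ω → ℝ}
  {a b : ℝ}

lemma integrableExpSet_eq_univ_of_mem_Icc (hX : AEMeasurable X ν)
    (hab : ∀ᵐ ω ∂ν, X ω ∈ Set.Icc a b) : integrableExpSet X ν = Set.univ := by
  refine Set.eq_univ_of_forall fun t ↦ ?_
  refine Integrable.of_bound (by fun_prop) (exp (|t| * (|a| + |b|))) ?_
  filter_upwards [hab] with ω ⟨ha, hb⟩
  rw [norm_of_nonneg (exp_nonneg _), exp_le_exp]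
  have hX : |X ω| ≤ |a| + |b| :=
    abs_le.2 ⟨by linarith [neg_abs_le a, abs_nonneg b],
      by linarith [le_abs_self b, abs_nonneg a]⟩
  calc t * X ω ≤ |t| * |X ω| := (le_abs_self _).trans (abs_mul _ _).le
    _ ≤ |t| * (|a| + |b|) := by gcongr

lemma analyticOnNhd_cgf_of_mem_Icc (hX : AEMeasurable X ν)
    (hab : ∀ᵐ ω ∂ν, X ω ∈ Set.Icc a b) :
    AnalyticOnNhd ℝ (cgf X ν) Set.univ := by
  simpa [integrableExpSet_eq_univ_of_mem_Icc hX hab] using analyticOnNhd_cgf (X := X) (μ := ν)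

lemma iteratedDeriv_two_cgf_le_of_mem_Icc (hX : AEMeasurable X ν)
    (hab : ∀ᵐ ω ∂ν, X ω ∈ Set.Icc a b) (t : ℝ) :
    iteratedDeriv 2 (cgf X ν) t ≤ ((b - a) / 2) ^ 2 := by
  rcases eq_zero_or_neZero ν with rfl | _
  · simpa using sq_nonneg ((b - a) / 2)
  have ht : t ∈ interior (integrableExpSet X ν) := by
    simp [integrableExpSet_eq_univ_of_mem_Icc hX hab]
  have : IsProbabilityMeasure (ν.tilted (t * X ·)) :=
    isProbabilityMeasure_tilted (interior_subset (s := integrableExpSet X ν) ht)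
  rw [← variance_tilted_mul ht]
  exact variance_le_sq_of_bounded (tilted_absolutelyContinuous ν _ hab)
    (hX.mono_ac (tilted_absolutelyContinuous ν _))

lemma deriv_cgf_sub_deriv_cgf_le_of_mem_Icc (hX : AEMeasurable X ν)
    (hab : ∀ᵐ ω ∂ν, X ω ∈ Set.Icc a b) {t₀ t₁ : ℝ} (ht : t₀ ≤ t₁) :
    deriv (cgf X ν) t₁ - deriv (cgf X ν) t₀ ≤ ((b - a) / 2) ^ 2 * (t₁ - t₀) := by
  refine image_sub_le_mul_sub_of_deriv_le ?_ (fun t ↦ ?_) ht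
  · exact differentiableOn_univ.1 (analyticOnNhd_cgf_of_mem_Icc hX hab).deriv.differentiableOn
  · simpa only [iteratedDeriv_succ, iteratedDeriv_zero] using
      iteratedDeriv_two_cgf_le_of_mem_Icc hX hab t

end ProbabilityTheory

/- From `|r| ≤ 1 + r²` and `x e^{-x} ≤ 1`. Being uniform in `r`, it dominates the derivative of
the Gaussian kernel without any assumption on the support of the smoothed measure. -/
lemma abs_mul_exp_neg_sq_div_le {s : ℝ} (hs : 0 < s) (r : ℝ) :
    |r| * exp (-r ^ 2 / (2 * s)) ≤ 1 + 2 * s := by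
  have he : 0 < exp (-r ^ 2 / (2 * s)) := exp_pos _
  have he_le : exp (-r ^ 2 / (2 * s)) ≤ 1 := exp_le_one_iff.2 (by
    apply div_nonpos_of_nonpos_of_nonneg <;> nlinarith)
  have hsq : r ^ 2 * exp (-r ^ 2 / (2 * s)) ≤ 2 * s := by
    have hx := add_one_le_exp (r ^ 2 / (2 * s))
    rw [neg_div, exp_neg, ← div_eq_mul_inv, div_le_iff₀ (exp_pos _)]
    calc r ^ 2 = 2 * s * (r ^ 2 / (2 * s)) := by field_simp
      _ ≤ 2 * s * exp (r ^ 2 / (2 * s)) := by gcongr; linarith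
  have habs : |r| ≤ 1 + r ^ 2 := by nlinarith [sq_abs r, sq_nonneg (|r| - 1)]
  nlinarith

section GaussianKernel

open ProbabilityTheory

variable {E : Type*} [NormedAddCommGroup E] {α : Type*} [MeasurableSpace α] {μ : Measure α}
  {φ : α → E} {s : ℝ}

lemma integrable_exp_neg_norm_sub_sq_div [IsFiniteMeasure μ] (hφ : AEStronglyMeasurable φ μ)
    (hs : 0 < s) (x : E) : Integrable (fun z ↦ exp (-‖x - φ z‖ ^ 2 / (2 * s))) μ := by
  refine .of_bound ((by fun_prop : Continuous fun v : E ↦ exp (-‖x - v‖ ^ 2 / (2 * s))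
    ).comp_aestronglyMeasurable hφ) 1 (.of_forall fun z ↦ ?_)
  rw [norm_of_nonneg (exp_nonneg _), exp_le_one_iff]
  exact div_nonpos_of_nonpos_of_nonneg (neg_nonpos.2 (by positivity)) (by positivity)

noncomputable def gaussianSmoothing (μ : Measure α) (φ : α → E) (s : ℝ) (x : E) : ℝ :=
  ∫ z, exp (-‖x - φ z‖ ^ 2 / (2 * s)) ∂μ

lemma gaussianSmoothing_pos [IsFiniteMeasure μ] [NeZero μ] (hφ : AEStronglyMeasurable φ μ)
    (hs : 0 < s) (x : E) : 0 < gaussianSmoothing μ φ s x :=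
  integral_exp_pos (integrable_exp_neg_norm_sub_sq_div hφ hs x)

variable [InnerProductSpace ℝ E]

lemma ae_inner_sub_div_mem_Icc (hs : 0 < s) {r : ℝ} (hφr : ∀ᵐ z ∂μ, ‖φ z‖ ≤ r)
    (u y : E) :
    ∀ᵐ z ∂μ, ⟪u, φ z - y⟫ / s ∈
      Set.Icc (-⟪u, y⟫ / s - r * ‖u‖ / s) (-⟪u, y⟫ / s + r * ‖u‖ / s) := by
  filter_upwards [hφr] with z hz
  have h := (abs_real_inner_le_norm u (φ z)).trans (mul_le_mul_of_nonneg_left hz (norm_nonneg u))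
  rw [Set.mem_Icc, ← sub_div, ← add_div, div_le_div_iff_of_pos_right hs,
    div_le_div_iff_of_pos_right hs, inner_sub_right, mul_comm r]
  constructor <;> linarith [abs_le.1 h]

lemma hasFDerivAt_exp_neg_norm_sub_sq_div (s : ℝ) (v x : E) :
    HasFDerivAt (fun x ↦ exp (-‖x - v‖ ^ 2 / (2 * s)))
      ((-s⁻¹ * exp (-‖x - v‖ ^ 2 / (2 * s))) • innerSL ℝ (x - v)) x := by
  have hdiv (x : E) : -‖x - v‖ ^ 2 / (2 * s) = -(2 * s)⁻¹ * ‖x - v‖ ^ 2 := by ring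
  simp only [hdiv]
  refine (((hasFDerivAt_id x).sub_const v).norm_sq.const_mul (-(2 * s)⁻¹)).exp.congr_fderiv
    (ContinuousLinearMap.ext fun w ↦ ?_)
  simp only [id, ContinuousLinearMap.comp_id, smul_apply, coe_innerSL_apply,
    nsmul_eq_mul, smul_eq_mul]
  ring

lemma norm_smul_innerSL_exp_neg_norm_sq_div_le (hs : 0 < s) (w : E) :
    ‖(-s⁻¹ * exp (-‖w‖ ^ 2 / (2 * s))) • innerSL ℝ w‖ ≤ s⁻¹ * (1 + 2 * s) := by
  rw [norm_smul, innerSL_apply_norm, norm_mul, norm_neg, norm_inv, norm_of_nonneg hs.le,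
    norm_of_nonneg (exp_nonneg _), mul_assoc, mul_comm (exp _)]
  gcongr
  simpa using abs_mul_exp_neg_sq_div_le hs ‖w‖

lemma differentiable_gaussianSmoothing [IsFiniteMeasure μ] (hφ : AEStronglyMeasurable φ μ)
    (hs : 0 < s) : Differentiable ℝ (gaussianSmoothing μ φ s) := by
  intro x₀
  refine (hasFDerivAt_integral_of_dominated_of_fderiv_le (bound := fun _ ↦ s⁻¹ * (1 + 2 * s))
    (F' := fun x z ↦ (-s⁻¹ * exp (-‖x - φ z‖ ^ 2 / (2 * s))) • innerSL ℝ (x - φ z))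
    Filter.univ_mem (.of_forall fun x ↦ ?_) ?_ ?_ (.of_forall fun z x _ ↦ ?_)
    (integrable_const _) (.of_forall fun z x _ ↦ ?_)).differentiableAt
  · exact (integrable_exp_neg_norm_sub_sq_div hφ hs x).aestronglyMeasurable
  · exact integrable_exp_neg_norm_sub_sq_div hφ hs x₀
  · exact (by fun_prop : Continuous fun v : E ↦
      (-s⁻¹ * exp (-‖x₀ - v‖ ^ 2 / (2 * s))) • innerSL ℝ (x₀ - v)
      ).comp_aestronglyMeasurable hφ
  · exact norm_smul_innerSL_exp_neg_norm_sq_div_le hs _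
  · exact hasFDerivAt_exp_neg_norm_sub_sq_div s (φ z) x

lemma exp_neg_norm_add_smul_sub_sq_div (s τ : ℝ) (y u v : E) :
    exp (-‖y + τ • u - v‖ ^ 2 / (2 * s)) =
      exp (-(τ ^ 2 * ‖u‖ ^ 2) / (2 * s)) *
        (exp (-‖y - v‖ ^ 2 / (2 * s)) * exp (τ * (⟪u, v - y⟫ / s))) := by
  rw [← exp_add, ← exp_add, add_sub_right_comm, norm_add_sq_real, norm_smul,
    real_inner_smul_right, mul_pow, norm_eq_abs, sq_abs, ← neg_sub v y, inner_neg_left,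
    real_inner_comm]
  congr 1
  ring

lemma gaussianSmoothing_add_smul [IsFiniteMeasure μ] (hφ : AEStronglyMeasurable φ μ)
    (hs : 0 < s) (y u : E) (τ : ℝ) :
    gaussianSmoothing μ φ s (y + τ • u) =
      exp (-(τ ^ 2 * ‖u‖ ^ 2) / (2 * s)) * mgf (fun z ↦ ⟪u, φ z - y⟫ / s)
        (μ.withDensity fun z ↦ ENNReal.ofReal (exp (-‖y - φ z‖ ^ 2 / (2 * s)))) τ := by
  rw [gaussianSmoothing, mgf, integral_withDensity_eq_integral_toReal_smul₀
    (integrable_exp_neg_norm_sub_sq_div hφ hs y).aemeasurable.ennreal_ofReal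
    (.of_forall fun _ ↦ ENNReal.ofReal_lt_top), ← integral_const_mul]
  simp only [exp_neg_norm_add_smul_sub_sq_div s τ y u, ENNReal.toReal_ofReal (exp_nonneg _),
    smul_eq_mul]

lemma differentiable_log_const_mul_gaussianSmoothing [IsFiniteMeasure μ] [NeZero μ]
    (hφ : AEStronglyMeasurable φ μ) (hs : 0 < s) {c : ℝ} (hc : 0 < c) :
    Differentiable ℝ fun x ↦ log (c * gaussianSmoothing μ φ s x) := fun x ↦
  ((differentiable_gaussianSmoothing hφ hs x).const_mul c).log
    (mul_pos hc (gaussianSmoothing_pos hφ hs x)).ne'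

lemma deriv_log_const_mul_gaussianSmoothing_line_sub_le [IsFiniteMeasure μ] [NeZero μ]
    (hφ : AEStronglyMeasurable φ μ) {r c : ℝ} (hs : 0 < s) (hc : 0 < c)
    (hφr : ∀ᵐ z ∂μ, ‖φ z‖ ≤ r) (y u : E) :
    deriv (fun τ : ℝ ↦ log (c * gaussianSmoothing μ φ s (y + τ • u))) 1 -
      deriv (fun τ : ℝ ↦ log (c * gaussianSmoothing μ φ s (y + τ • u))) 0 ≤
      (r * ‖u‖ / s) ^ 2 - ‖u‖ ^ 2 / s := by
  set ν := μ.withDensity fun z ↦ ENNReal.ofReal (exp (-‖y - φ z‖ ^ 2 / (2 * s)))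
  set X : α → ℝ := fun z ↦ ⟪u, φ z - y⟫ / s
  have : IsFiniteMeasure ν :=
    isFiniteMeasure_withDensity_ofReal (integrable_exp_neg_norm_sub_sq_div hφ hs y).2
  have hνμ : ν ≪ μ := withDensity_absolutelyContinuous _ _
  have hX : AEMeasurable X ν :=
    ((by fun_prop : Continuous fun v ↦ ⟪u, v - y⟫ / s).comp_aestronglyMeasurable
      hφ).aemeasurable.mono_ac hνμ
  have hX_mem := hνμ.ae_le (ae_inner_sub_div_mem_Icc hs hφr u y)
  have hG := gaussianSmoothing_pos hφ hs
  have hline : (fun τ : ℝ ↦ log (c * gaussianSmoothing μ φ s (y + τ • u))) =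
      fun τ ↦ log c + (-(τ ^ 2 * ‖u‖ ^ 2) / (2 * s) + cgf X ν τ) := by
    funext τ
    have hmgf := gaussianSmoothing_add_smul hφ hs y u τ
    have hmgf_pos : 0 < mgf X ν τ := pos_of_mul_pos_right (hmgf ▸ hG _) (exp_pos _).le
    rw [log_mul hc.ne' (hG _).ne', hmgf, log_mul (exp_pos _).ne' hmgf_pos.ne', log_exp]
    rfl
  have hcgf : Differentiable ℝ (cgf X ν) :=
    differentiableOn_univ.1 (analyticOnNhd_cgf_of_mem_Icc hX hX_mem).differentiableOn
  have hderiv (τ : ℝ) :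
      deriv (fun τ : ℝ ↦ log (c * gaussianSmoothing μ φ s (y + τ • u))) τ =
        -(τ * ‖u‖ ^ 2) / s + deriv (cgf X ν) τ := by
    rw [hline]
    refine ((hasDerivAt_const τ _).add ((((hasDerivAt_pow 2 τ).mul_const _).neg.div_const _).add
      (hcgf τ).hasDerivAt)).deriv.trans ?_
    field_simp
    ring
  rw [hderiv, hderiv]
  calc _ = deriv (cgf X ν) 1 - deriv (cgf X ν) 0 - ‖u‖ ^ 2 / s := by ring
    _ ≤ _ := by
      gcongr
      exact (deriv_cgf_sub_deriv_cgf_le_of_mem_Icc hX hX_mem zero_le_one).trans_eq (by ring)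

variable [CompleteSpace E]

lemma inner_gradient_eq_deriv_line {f : E → ℝ} {y u : E} {τ : ℝ}
    (hf : DifferentiableAt ℝ f (y + τ • u)) :
    ⟪u, gradient f (y + τ • u)⟫ = deriv (fun τ ↦ f (y + τ • u)) τ := by
  have hline : HasDerivAt (fun τ : ℝ ↦ y + τ • u) u τ := by
    simpa using ((hasDerivAt_id τ).smul_const u).const_add y
  rw [real_inner_comm, gradient, InnerProductSpace.toDual_symm_apply]
  exact (hf.hasFDerivAt.comp_hasDerivAt τ hline).deriv.symm

theorem inner_gradient_log_const_mul_gaussianSmoothing_sub_le [IsFiniteMeasure μ] [NeZero μ]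
    (hφ : AEStronglyMeasurable φ μ) {r c : ℝ} (hs : 0 < s) (hc : 0 < c)
    (hφr : ∀ᵐ z ∂μ, ‖φ z‖ ≤ r) (x y : E) :
    ⟪x - y, gradient (fun x ↦ log (c * gaussianSmoothing μ φ s x)) x -
      gradient (fun x ↦ log (c * gaussianSmoothing μ φ s x)) y⟫ ≤
      (r ^ 2 / s ^ 2 - 1 / s) * ‖x - y‖ ^ 2 := by
  have hdiff := differentiable_log_const_mul_gaussianSmoothing hφ hs hc
  have h1 := inner_gradient_eq_deriv_line (hdiff (y + (1 : ℝ) • (x - y)))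
  have h0 := inner_gradient_eq_deriv_line (hdiff (y + (0 : ℝ) • (x - y)))
  rw [one_smul, add_sub_cancel] at h1
  rw [zero_smul, add_zero] at h0
  rw [inner_sub_right, h1, h0]
  refine (deriv_log_const_mul_gaussianSmoothing_line_sub_le hφ hs hc hφr y (x - y)).trans_eq ?_
  field_simp

end GaussianKernel

theorem stmt11_general (d : ℕ) (R t s : ℝ) (ht : 0 < t)
    (hs : s = 1 - Real.exp (-t))
    (μ : Measure (EuclideanSpace ℝ (Fin d))) [IsProbabilityMeasure μ]
    (hμsupp : msupport μ ⊆ Metric.closedBall 0 R)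
    (q : EuclideanSpace ℝ (Fin d) → ℝ)
    (hq : ∀ x, q x = ∫ z, (2 * π * s) ^ (-(d : ℝ) / 2) *
      Real.exp (-‖x - Real.exp (-t / 2) • z‖ ^ 2 / (2 * s)) ∂μ) :
    (∀ x, 0 < q x) ∧
    (Differentiable ℝ fun x => Real.log (q x)) ∧
    ∀ x y : EuclideanSpace ℝ (Fin d),
      ⟪x - y, gradient (fun z => Real.log (q z)) x - gradient (fun z => Real.log (q z)) y⟫ ≤
        (R ^ 2 * Real.exp (-t) / s ^ 2 - 1 / s) * ‖x - y‖ ^ 2 := by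
  have hs0 : 0 < s := by rw [hs, sub_pos, exp_lt_one_iff]; linarith
  set c := (2 * π * s) ^ (-(d : ℝ) / 2)
  have hc : 0 < c := rpow_pos_of_pos (by positivity) _
  have hφ : AEStronglyMeasurable (exp (-t / 2) • ·) μ := by fun_prop
  obtain rfl : q = fun x ↦ c * gaussianSmoothing μ (exp (-t / 2) • ·) s x :=
    funext fun x ↦ (hq x).trans (integral_const_mul _ _)
  refine ⟨fun x ↦ mul_pos hc (gaussianSmoothing_pos hφ hs0 x),
    differentiable_log_const_mul_gaussianSmoothing hφ hs0 hc, fun x y ↦ ?_⟩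
  have hr : ∀ᵐ z ∂μ, ‖exp (-t / 2) • z‖ ≤ exp (-t / 2) * R := by
    filter_upwards [ae_norm_le_of_msupport_subset_closedBall hμsupp] with z hz
    rw [norm_smul, norm_of_nonneg (exp_nonneg _)]
    gcongr
  convert inner_gradient_log_const_mul_gaussianSmoothing_sub_le hφ hs0 hc hr x y using 3
  rw [mul_pow, ← exp_nat_mul]
  ring_nf

theorem stmt11 (d : ℕ) (hd : 1 ≤ d) (R t s : ℝ) (hR : 0 < R) (ht : 0 < t)
    (hs : s = 1 - Real.exp (-t))
    (μ : Measure (EuclideanSpace ℝ (Fin d))) [IsProbabilityMeasure μ]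
    (hμsupp : msupport μ ⊆ Metric.closedBall 0 R)
    (q : EuclideanSpace ℝ (Fin d) → ℝ)
    (hq : ∀ x, q x = ∫ z, (2 * π * s) ^ (-(d : ℝ) / 2) *
      Real.exp (-‖x - Real.exp (-t / 2) • z‖ ^ 2 / (2 * s)) ∂μ) :
    (∀ x, 0 < q x) ∧
    (Differentiable ℝ fun x => Real.log (q x)) ∧
    ∀ x y : EuclideanSpace ℝ (Fin d),
      ⟪x - y, gradient (fun z => Real.log (q z)) x - gradient (fun z => Real.log (q z)) y⟫ ≤
        (R ^ 2 * Real.exp (-t) / s ^ 2 - 1 / s) * ‖x - y‖ ^ 2 :=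
  stmt11_general d R t s ht hs μ hμsupp q hq
end
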